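/- arXiv:1204.5703 — 5 statements merged into one kernel-verified Lean document; each statement's English description precedes it below -/
import Mathlib

section
/- For a scalar admissible system (f,g), if ε < ε* (the potential threshold), then U(x;ε) > 0 for all x ∈ (0,1]. -/
open MeasureTheory Set Filter Topology

noncomputable section

/-- A scalar admissible system `(f, g)` parameterized by `ε ∈ [0,1]`:
`f : [0,1]×[0,1] → [0,1]` is strictly increasing in both arguments for `x, ε ∈ (0,1]`,
`g : [0,1] → [0,1]` has `g'(x) > 0` for `x ∈ (0,1)`, `f(0;ε) = f(x;0) = g(0) = 0`,
and `f, g` have continuous second derivatives on `[0,1]` w.r.t. all arguments. -/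
structure ScalarAdmissible (f : ℝ → ℝ → ℝ) (g : ℝ → ℝ) : Prop where
  f_mem : ∀ x ∈ Icc (0:ℝ) 1, ∀ ε ∈ Icc (0:ℝ) 1, f x ε ∈ Icc (0:ℝ) 1
  g_mem : ∀ x ∈ Icc (0:ℝ) 1, g x ∈ Icc (0:ℝ) 1
  f_mono_x : ∀ ε ∈ Ioc (0:ℝ) 1, StrictMonoOn (fun x => f x ε) (Ioc (0:ℝ) 1)
  f_mono_eps : ∀ x ∈ Ioc (0:ℝ) 1, StrictMonoOn (fun ε => f x ε) (Ioc (0:ℝ) 1)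
  g_deriv_pos : ∀ x ∈ Ioo (0:ℝ) 1, 0 < deriv g x
  f_zero_left : ∀ ε ∈ Icc (0:ℝ) 1, f 0 ε = 0
  f_zero_right : ∀ x ∈ Icc (0:ℝ) 1, f x 0 = 0
  g_zero : g 0 = 0
  f_smooth : ContDiffOn ℝ 2 (fun p : ℝ × ℝ => f p.1 p.2) (Icc (0:ℝ) 1 ×ˢ Icc (0:ℝ) 1)
  g_smooth : ContDiffOn ℝ 2 g (Icc (0:ℝ) 1)

/-- The single-system potential `U(x;ε) = ∫₀ˣ (z − f(g(z);ε)) g'(z) dz`. -/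
def singlePotential (f : ℝ → ℝ → ℝ) (g : ℝ → ℝ) (x ε : ℝ) : ℝ :=
  ∫ z in (0:ℝ)..x, (z - f (g z) ε) * deriv g z

/-- `u(ε) = sup { x̃ ∈ [0,1] : f(g(x);ε) < x for all x ∈ (0,x̃) }`,
the minimum unstable fixed point. -/
def uFix (f : ℝ → ℝ → ℝ) (g : ℝ → ℝ) (ε : ℝ) : ℝ :=
  sSup {xt : ℝ | xt ∈ Icc (0:ℝ) 1 ∧ ∀ x : ℝ, 0 < x → x < xt → f (g x) ε < x}

/-- The energy gap `ΔE(ε) = min_{x ∈ [u(ε),1]} U(x;ε)`. -/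
def energyGap (f : ℝ → ℝ → ℝ) (g : ℝ → ℝ) (ε : ℝ) : ℝ :=
  sInf ((fun x => singlePotential f g x ε) '' Icc (uFix f g ε) 1)

/-- The potential threshold
`ε* = sup { ε ∈ [0,1] : u(ε) > 0 and min_{x ∈ [u(ε),1]} U(x;ε) ≥ 0 }`. -/
def potentialThreshold (f : ℝ → ℝ → ℝ) (g : ℝ → ℝ) : ℝ :=
  sSup {ε : ℝ | ε ∈ Icc (0:ℝ) 1 ∧ 0 < uFix f g ε ∧ 0 ≤ energyGap f g ε}

/-!
Since `ε < ε*`, some `ε' > ε` has `u(ε') > 0` and `ΔE(ε') ≥ 0`. The potential `U(x;·)` is strictly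
decreasing on `[0,1]` because `f` is strictly increasing in `ε` and `g' > 0`, so
`U(x;ε) > U(x;ε')`. Finally `U(·;ε') ≥ 0` on `(0,1]`: below `u(ε')` the integrand
`(z - f(g z;ε')) g'(z)` is positive, and on `[u(ε'),1]` the potential is at least `ΔE(ε') ≥ 0`.
-/

lemma lt_of_lt_uFix {f : ℝ → ℝ → ℝ} {g : ℝ → ℝ} {e z : ℝ} (hz : 0 < z) (hzu : z < uFix f g e) :
    f (g z) e < z := by
  have hne : {xt : ℝ | xt ∈ Icc (0:ℝ) 1 ∧ ∀ x : ℝ, 0 < x → x < xt → f (g x) e < x}.Nonempty :=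
    ⟨0, left_mem_Icc.2 zero_le_one, fun x hx hx0 => absurd hx (not_lt.2 hx0.le)⟩
  obtain ⟨xt, hxt, hzxt⟩ := exists_lt_of_lt_csSup hne hzu
  exact hxt.2 z hz hzxt

lemma exists_gt_of_lt_potentialThreshold {f : ℝ → ℝ → ℝ} {g : ℝ → ℝ} {ε : ℝ} (hε : 0 ≤ ε)
    (hlt : ε < potentialThreshold f g) :
    ∃ ε' ∈ Ioc ε 1, 0 < uFix f g ε' ∧ 0 ≤ energyGap f g ε' := by
  have hne : {ε : ℝ | ε ∈ Icc (0:ℝ) 1 ∧ 0 < uFix f g ε ∧ 0 ≤ energyGap f g ε}.Nonempty := by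
    by_contra h
    rw [not_nonempty_iff_eq_empty] at h
    rw [potentialThreshold, h, Real.sSup_empty] at hlt
    exact hlt.not_ge hε
  obtain ⟨ε', ⟨hε'I, hu, hE⟩, hεε'⟩ := exists_lt_of_lt_csSup hne hlt
  exact ⟨ε', ⟨hεε', hε'I.2⟩, hu, hE⟩

/-- The integrand of `singlePotential` may use the one-sided derivative of `g` on `[0,1]`, which,
unlike `deriv g`, is continuous up to the endpoints. -/
lemma singlePotential_eq_integral_derivWithin (f : ℝ → ℝ → ℝ) (g : ℝ → ℝ) {x : ℝ} (e : ℝ)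
    (hx : x ∈ Icc (0:ℝ) 1) :
    singlePotential f g x e = ∫ z in (0:ℝ)..x, (z - f (g z) e) * derivWithin g (Icc 0 1) z :=
  intervalIntegral.integral_congr_Ioo_of_le hx.1 fun z hz => by
    rw [derivWithin_of_mem_nhds (Icc_mem_nhds hz.1 (hz.2.trans_le hx.2))]

namespace ScalarAdmissible

variable {f : ℝ → ℝ → ℝ} {g : ℝ → ℝ} (hsys : ScalarAdmissible f g)
include hsys

lemma g_mem_Ioc {z : ℝ} (hz : z ∈ Ioc (0:ℝ) 1) : g z ∈ Ioc (0:ℝ) 1 := by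
  have hmono : StrictMonoOn g (Icc (0:ℝ) 1) := by
    apply strictMonoOn_of_deriv_pos (convex_Icc 0 1) hsys.g_smooth.continuousOn
    rw [interior_Icc]
    exact hsys.g_deriv_pos
  have hpos := hmono (left_mem_Icc.2 zero_le_one) (Ioc_subset_Icc_self hz) hz.1
  rw [hsys.g_zero] at hpos
  exact ⟨hpos, (hsys.g_mem z (Ioc_subset_Icc_self hz)).2⟩

lemma strictMonoOn_f {y : ℝ} (hy : y ∈ Ioc (0:ℝ) 1) : StrictMonoOn (f y) (Icc (0:ℝ) 1) := by
  rintro e he e' ⟨-, he'1⟩ hee'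
  rcases he.1.eq_or_lt with rfl | he0
  · calc f y 0 = 0 := hsys.f_zero_right y (Ioc_subset_Icc_self hy)
      _ ≤ f y (e' / 2) := (hsys.f_mem y (Ioc_subset_Icc_self hy) _ ⟨by linarith, by linarith⟩).1
      _ < f y e' := hsys.f_mono_eps y hy ⟨by linarith, by linarith⟩ ⟨hee', he'1⟩ (by linarith)
  · exact hsys.f_mono_eps y hy ⟨he0, he.2⟩ ⟨he0.trans hee', he'1⟩ hee'

lemma continuousOn_f_comp_g {e : ℝ} (he : e ∈ Icc (0:ℝ) 1) :
    ContinuousOn (fun z => f (g z) e) (Icc (0:ℝ) 1) :=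
  hsys.f_smooth.continuousOn.comp (hsys.g_smooth.continuousOn.prodMk continuousOn_const)
    fun z hz => ⟨hsys.g_mem z hz, he⟩

lemma continuousOn_derivWithin_g : ContinuousOn (derivWithin g (Icc 0 1)) (Icc (0:ℝ) 1) :=
  hsys.g_smooth.continuousOn_derivWithin (uniqueDiffOn_Icc one_pos) (by norm_num)

lemma derivWithin_g_pos {z : ℝ} (hz : z ∈ Ioo (0:ℝ) 1) : 0 < derivWithin g (Icc 0 1) z := by
  rw [derivWithin_of_mem_nhds (Icc_mem_nhds hz.1 hz.2)]
  exact hsys.g_deriv_pos z hz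

lemma continuousOn_integrand {e : ℝ} (he : e ∈ Icc (0:ℝ) 1) :
    ContinuousOn (fun z => (z - f (g z) e) * derivWithin g (Icc 0 1) z) (Icc (0:ℝ) 1) :=
  (continuousOn_id.sub (hsys.continuousOn_f_comp_g he)).mul hsys.continuousOn_derivWithin_g

lemma continuousOn_singlePotential {e : ℝ} (he : e ∈ Icc (0:ℝ) 1) :
    ContinuousOn (fun x => singlePotential f g x e) (Icc (0:ℝ) 1) := by
  have hprim := intervalIntegral.continuousOn_primitive_interval (μ := volume)
    ((hsys.continuousOn_integrand he).mono (uIcc_of_le zero_le_one).subset).integrableOn_uIcc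
  rw [uIcc_of_le zero_le_one] at hprim
  exact hprim.congr fun x hx => singlePotential_eq_integral_derivWithin f g e hx

lemma singlePotential_pos_of_le_uFix {x e : ℝ} (hx : x ∈ Ioc (0:ℝ) 1) (he : e ∈ Icc (0:ℝ) 1)
    (hxu : x ≤ uFix f g e) : 0 < singlePotential f g x e := by
  rw [singlePotential_eq_integral_derivWithin f g e (Ioc_subset_Icc_self hx)]
  refine intervalIntegral.intervalIntegral_pos_of_pos_on ?_ (fun z hz => ?_) hx.1
  · exact ((hsys.continuousOn_integrand he).mono
      (uIcc_subset_Icc (left_mem_Icc.2 zero_le_one) (Ioc_subset_Icc_self hx))).intervalIntegrable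
  · exact mul_pos (sub_pos.2 (lt_of_lt_uFix hz.1 (hz.2.trans_le hxu)))
      (hsys.derivWithin_g_pos ⟨hz.1, hz.2.trans_le hx.2⟩)

lemma singlePotential_nonneg_of_energyGap_nonneg {x e : ℝ} (hx : x ∈ Ioc (0:ℝ) 1)
    (he : e ∈ Icc (0:ℝ) 1) (hu : 0 < uFix f g e) (hE : 0 ≤ energyGap f g e) :
    0 ≤ singlePotential f g x e := by
  rcases le_or_gt x (uFix f g e) with hxu | hxu
  · exact (hsys.singlePotential_pos_of_le_uFix hx he hxu).le
  have hsub : Icc (uFix f g e) 1 ⊆ Icc 0 1 := Icc_subset_Icc_left hu.le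
  have hbdd : BddBelow ((fun x => singlePotential f g x e) '' Icc (uFix f g e) 1) :=
    (isCompact_Icc.image_of_continuousOn
      ((hsys.continuousOn_singlePotential he).mono hsub)).bddBelow
  exact hE.trans (csInf_le hbdd ⟨x, ⟨hxu.le, hx.2⟩, rfl⟩)

lemma singlePotential_strictAntiOn {x : ℝ} (hx : x ∈ Ioc (0:ℝ) 1) :
    StrictAntiOn (singlePotential f g x) (Icc (0:ℝ) 1) := by
  intro e he e' he' hee'
  have hsub : uIcc 0 x ⊆ Icc (0:ℝ) 1 :=
    uIcc_subset_Icc (left_mem_Icc.2 zero_le_one) (Ioc_subset_Icc_self hx)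
  rw [← sub_pos, singlePotential_eq_integral_derivWithin f g e (Ioc_subset_Icc_self hx),
    singlePotential_eq_integral_derivWithin f g e' (Ioc_subset_Icc_self hx),
    ← intervalIntegral.integral_sub (((hsys.continuousOn_integrand he).mono hsub).intervalIntegrable)
      (((hsys.continuousOn_integrand he').mono hsub).intervalIntegrable)]
  refine intervalIntegral.intervalIntegral_pos_of_pos_on ?_ (fun z hz => ?_) hx.1
  · exact (((hsys.continuousOn_integrand he).sub
      (hsys.continuousOn_integrand he')).mono hsub).intervalIntegrable
  · have hzI : z ∈ Ioc (0:ℝ) 1 := ⟨hz.1, hz.2.le.trans hx.2⟩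
    have hf : f (g z) e < f (g z) e' := hsys.strictMonoOn_f (hsys.g_mem_Ioc hzI) he he' hee'
    have hg := hsys.derivWithin_g_pos ⟨hz.1, hz.2.trans_le hx.2⟩
    rw [← sub_mul]
    exact mul_pos (by linarith) hg

end ScalarAdmissible

/-- For a scalar admissible system `(f,g)`, if `ε < ε*` (the potential threshold), then
`U(x;ε) > 0` for all `x ∈ (0,1]`. -/
theorem potential_pos_below_threshold (f : ℝ → ℝ → ℝ) (g : ℝ → ℝ)
    (hsys : ScalarAdmissible f g) (ε : ℝ) (hε : 0 ≤ ε)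
    (hlt : ε < potentialThreshold f g) :
    ∀ x ∈ Ioc (0:ℝ) 1, 0 < singlePotential f g x ε := by
  obtain ⟨ε', ⟨hεε', hε'1⟩, hu, hE⟩ := exists_gt_of_lt_potentialThreshold hε hlt
  intro x hx
  have hε'I : ε' ∈ Icc (0:ℝ) 1 := ⟨hε.trans hεε'.le, hε'1⟩
  calc 0 ≤ singlePotential f g x ε' := hsys.singlePotential_nonneg_of_energyGap_nonneg hx hε'I hu hE
    _ < singlePotential f g x ε :=
        hsys.singlePotential_strictAntiOn hx ⟨hε, hεε'.le.trans hε'1⟩ hε'I hεε'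
end
end

section
/- Fix w ≥ 1, L ≥ 1, set i₀ = ⌊(w−1)/2⌋ and n = L+3w+i₀+1, and index vectors x ∈ [0,1]^n by positions i = −L−w, …, 2w+i₀. If the first w components of x are zero (x_i = 0 for i < −L) and the last 2w+1 components are all equal to x_{i₀} (x_i = x_{i₀} for i ≥ i₀), then the coupled potential satisfies U(Sx;ε) − U(x;ε) = −U_s(x_{i₀};ε), where U_s is the single-system potential. -/
open MeasureTheory Set Filter Topology

noncomputable section

/-- `F(x;ε) = ∫₀ˣ f(z;ε) dz`. -/
def Fint (f : ℝ → ℝ → ℝ) (x ε : ℝ) : ℝ := ∫ z in (0:ℝ)..x, f z ε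

/-- `G(x) = ∫₀ˣ g(z) dz`. -/
def Gint (g : ℝ → ℝ) (x : ℝ) : ℝ := ∫ z in (0:ℝ)..x, g z

/-- The `n × n` coupling matrix `A` with `[A]_{ij} = 1/w` for `i ≤ j ≤ i+w−1`, else `0`. -/
def Amat (n w : ℕ) : Matrix (Fin n) (Fin n) ℝ :=
  fun i j => if (i:ℕ) ≤ (j:ℕ) ∧ (j:ℕ) < (i:ℕ) + w then (1 / (w:ℝ)) else 0

/-- The coupled potential `U(x;ε) = g(x)ᵀx − Σᵢ G(xᵢ) − Σᵢ F([A g(x)]ᵢ; ε)`. -/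
def coupledPotential (f : ℝ → ℝ → ℝ) (g : ℝ → ℝ) (n w : ℕ) (x : Fin n → ℝ) (ε : ℝ) : ℝ :=
  (∑ i, g (x i) * x i) - (∑ i, Gint g (x i)) -
    ∑ i, Fint f ((Amat n w).mulVec (fun j => g (x j)) i) ε

/-- The shift operator `S`: `[Sx]₁ = 0` and `[Sx]_i = x_{i−1}` for `i ≥ 2`. -/
def shiftVec {n : ℕ} (x : Fin n → ℝ) : Fin n → ℝ :=
  fun i => if _ : (i:ℕ) = 0 then 0
    else x ⟨(i:ℕ) - 1, lt_of_le_of_lt (Nat.sub_le _ _) i.isLt⟩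

/-!
Extend `x` to a sequence `X` on `ℕ` that equals `c = x_{i₀}` from index `i₀` on; then `Sx` is `X`
shifted by one place with a `0` put in front. Under the shift, `∑ g(xᵢ) xᵢ` and `∑ G(xᵢ)` lose
exactly their last terms `g(c) c` and `G(c)`. For the coupling term, the last `w` rows of `A` see
truncated windows, which on the constant tail give `(w - k) g(c) / w` for both `x` and `Sx`; the
other rows see full windows, and those of `Sx` are those of `x` shifted by one with a zero window
put in front, so `∑ F` loses `F(g(c))`. Finally `U_s(c) = c g(c) - G(c) - F(g(c))` by the
fundamental theorem of calculus.
-/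

theorem hasDerivAt_intervalIntegral_of_continuousOn {φ : ℝ → ℝ} {a b z : ℝ}
    (hφ : ContinuousOn φ (Icc a b)) (hz : z ∈ Ioo a b) :
    HasDerivAt (fun x => ∫ t in a..x, φ t) (φ z) z :=
  intervalIntegral.integral_hasDerivAt_right
    ((hφ.mono (Icc_subset_Icc le_rfl hz.2.le)).intervalIntegrable_of_Icc hz.1.le)
    ((hφ.mono Ioo_subset_Icc_self).stronglyMeasurableAtFilter isOpen_Ioo z hz)
    (hφ.continuousAt (Icc_mem_nhds hz.1 hz.2))

theorem continuousOn_intervalIntegral_of_continuousOn {φ : ℝ → ℝ} {a b : ℝ} (hab : a ≤ b)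
    (hφ : ContinuousOn φ (Icc a b)) :
    ContinuousOn (fun x => ∫ t in a..x, φ t) (Icc a b) := by
  have hint : IntegrableOn φ (uIcc a b) := by
    rw [uIcc_of_le hab]; exact hφ.integrableOn_Icc
  simpa only [uIcc_of_le hab] using intervalIntegral.continuousOn_primitive_interval hint

namespace ScalarAdmissible

variable {f : ℝ → ℝ → ℝ} {g : ℝ → ℝ}

theorem continuousOn_g (hsys : ScalarAdmissible f g) : ContinuousOn g (Icc 0 1) :=
  hsys.g_smooth.continuousOn

theorem continuousOn_f_left (hsys : ScalarAdmissible f g) {ε : ℝ} (hε : ε ∈ Icc (0:ℝ) 1) :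
    ContinuousOn (fun u => f u ε) (Icc 0 1) :=
  hsys.f_smooth.continuousOn.comp (Continuous.prodMk_left ε).continuousOn
    fun _ hu => mk_mem_prod hu hε

theorem hasDerivAt_g (hsys : ScalarAdmissible f g) {z : ℝ} (hz : z ∈ Ioo (0:ℝ) 1) :
    HasDerivAt g (deriv g z) z :=
  ((hsys.g_smooth.differentiableOn (by norm_num)).differentiableAt
    (Icc_mem_nhds hz.1 hz.2)).hasDerivAt

theorem mapsTo_g_Ioo (hsys : ScalarAdmissible f g) : MapsTo g (Ioo 0 1) (Ioo 0 1) := by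
  have hmono : StrictMonoOn g (Icc 0 1) :=
    strictMonoOn_of_deriv_pos (convex_Icc 0 1) hsys.continuousOn_g
      fun z hz => hsys.g_deriv_pos z (by rwa [interior_Icc] at hz)
  intro z hz
  have h0 : (0:ℝ) ∈ Icc (0:ℝ) 1 := left_mem_Icc.2 zero_le_one
  have h1 : (1:ℝ) ∈ Icc (0:ℝ) 1 := right_mem_Icc.2 zero_le_one
  refine ⟨?_, ?_⟩
  · simpa [hsys.g_zero] using hmono h0 (Ioo_subset_Icc_self hz) hz.1
  · exact (hmono (Ioo_subset_Icc_self hz) h1 hz.2).trans_le (hsys.g_mem 1 h1).2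

theorem hasDerivAt_mul_sub_Gint_sub_Fint (hsys : ScalarAdmissible f g) {ε z : ℝ}
    (hε : ε ∈ Icc (0:ℝ) 1) (hz : z ∈ Ioo (0:ℝ) 1) :
    HasDerivAt (fun y => y * g y - Gint g y - Fint f (g y) ε)
      ((z - f (g z) ε) * deriv g z) z := by
  have hg := hsys.hasDerivAt_g hz
  have hG : HasDerivAt (Gint g) (g z) z :=
    hasDerivAt_intervalIntegral_of_continuousOn hsys.continuousOn_g hz
  have hF : HasDerivAt (fun u => Fint f u ε) (f (g z) ε) (g z) :=
    hasDerivAt_intervalIntegral_of_continuousOn (hsys.continuousOn_f_left hε)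
      (hsys.mapsTo_g_Ioo hz)
  refine ((((hasDerivAt_id' z).mul hg).sub hG).sub (hF.comp z hg)).congr_deriv ?_
  ring

theorem singlePotential_eq (hsys : ScalarAdmissible f g) {ε c : ℝ} (hε : ε ∈ Icc (0:ℝ) 1)
    (hc : c ∈ Icc (0:ℝ) 1) :
    singlePotential f g c ε = c * g c - Gint g c - Fint f (g c) ε := by
  have hsub : Icc 0 c ⊆ Icc (0:ℝ) 1 := Icc_subset_Icc le_rfl hc.2
  have hsubIoo : Ioo 0 c ⊆ Ioo (0:ℝ) 1 := Ioo_subset_Ioo le_rfl hc.2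
  have hmaps : MapsTo g (Icc 0 c) (Icc 0 1) := fun z hz => hsys.g_mem z (hsub hz)
  have hG : ContinuousOn (Gint g) (Icc 0 1) :=
    continuousOn_intervalIntegral_of_continuousOn zero_le_one hsys.continuousOn_g
  have hF : ContinuousOn (fun u => Fint f u ε) (Icc 0 1) :=
    continuousOn_intervalIntegral_of_continuousOn zero_le_one (hsys.continuousOn_f_left hε)
  have hcont : ContinuousOn (fun y => y * g y - Gint g y - Fint f (g y) ε) (Icc 0 c) :=
    ((continuousOn_id.mul (hsys.continuousOn_g.mono hsub)).sub (hG.mono hsub)).sub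
      (hF.comp (hsys.continuousOn_g.mono hsub) hmaps)
  have hderiv_int : IntervalIntegrable (deriv g) volume 0 c :=
    intervalIntegral.intervalIntegrable_deriv_of_nonneg
      (hsys.continuousOn_g.mono (by rwa [uIcc_of_le hc.1]))
      (fun z hz => hsys.hasDerivAt_g (hsubIoo (by simpa [hc.1] using hz)))
      (fun z hz => (hsys.g_deriv_pos z (hsubIoo (by simpa [hc.1] using hz))).le)
  have hint : IntervalIntegrable (fun z => (z - f (g z) ε) * deriv g z) volume 0 c := by
    refine hderiv_int.continuousOn_mul (continuousOn_id.sub ?_)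
    rw [uIcc_of_le hc.1]
    exact (hsys.continuousOn_f_left hε).comp (hsys.continuousOn_g.mono hsub) hmaps
  rw [singlePotential, intervalIntegral.integral_eq_sub_of_hasDerivAt_of_le hc.1 hcont
    (fun z hz => hsys.hasDerivAt_mul_sub_Gint_sub_Fint hε (hsubIoo hz)) hint]
  simp [Gint, Fint, hsys.g_zero]

end ScalarAdmissible

theorem Finset.sum_range_succ_sub_sum_range_succ_of_succ_eq {M : Type*} [AddCommGroup M]
    {u v : ℕ → M} (h : ∀ k, v (k + 1) = u k) (N : ℕ) :
    ∑ k ∈ Finset.range (N + 1), v k - ∑ k ∈ Finset.range (N + 1), u k = v 0 - u N := by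
  rw [Finset.sum_range_succ', Finset.sum_range_succ]
  simp only [h]
  abel

def shiftSeq (X : ℕ → ℝ) : ℕ → ℝ
  | 0 => 0
  | k + 1 => X k

theorem shiftVec_eq_shiftSeq {n : ℕ} (X : ℕ → ℝ) :
    shiftVec (fun i : Fin n => X i) = fun i : Fin n => shiftSeq X i := by
  funext ⟨i, hi⟩
  cases i <;> rfl

theorem apply_shiftSeq {g : ℝ → ℝ} (hg : g 0 = 0) (X : ℕ → ℝ) (k : ℕ) :
    g (shiftSeq X k) = shiftSeq (fun j => g (X j)) k := by
  cases k <;> simp [shiftSeq, hg]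

theorem sum_shiftVec_sub {n : ℕ} (hn : 0 < n) (φ : ℝ → ℝ) (X : ℕ → ℝ) :
    ∑ i : Fin n, φ (shiftVec (fun i : Fin n => X i) i) - ∑ i : Fin n, φ (X i) =
      φ 0 - φ (X (n - 1)) := by
  obtain ⟨N, rfl⟩ : ∃ N, n = N + 1 := ⟨n - 1, by omega⟩
  rw [shiftVec_eq_shiftSeq, Fin.sum_univ_eq_sum_range (fun k => φ (shiftSeq X k)),
    Fin.sum_univ_eq_sum_range (fun k => φ (X k))]
  exact Finset.sum_range_succ_sub_sum_range_succ_of_succ_eq (fun _ => rfl) N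

def windowAvg (w : ℕ) (y : ℕ → ℝ) (i : ℕ) : ℝ := (∑ j ∈ Finset.range w, y (i + j)) / w

theorem windowAvg_shiftSeq_succ (w : ℕ) (y : ℕ → ℝ) (i : ℕ) :
    windowAvg w (shiftSeq y) (i + 1) = windowAvg w y i := by
  simp only [windowAvg, Nat.add_right_comm i 1, shiftSeq]

theorem windowAvg_shiftSeq_zero {w : ℕ} {y : ℕ → ℝ} (hy : ∀ k, k + 1 < w → y k = 0) :
    windowAvg w (shiftSeq y) 0 = 0 := by
  rw [windowAvg, Finset.sum_eq_zero, zero_div]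
  intro j hj
  rw [zero_add]
  cases j with
  | zero => rfl
  | succ k => exact hy k (by simpa using hj)

theorem windowAvg_of_le {w t i : ℕ} (hw : w ≠ 0) {y : ℕ → ℝ} {b : ℝ}
    (hy : ∀ k, t ≤ k → y k = b) (ht : t ≤ i) : windowAvg w y i = b := by
  rw [windowAvg, Finset.sum_congr rfl fun j _ => hy (i + j) (by omega), Finset.sum_const,
    Finset.card_range, nsmul_eq_mul, mul_div_cancel_left₀ _ (by exact_mod_cast hw)]

theorem Amat_mulVec_apply {n : ℕ} (w : ℕ) (y : ℕ → ℝ) (i : Fin n) :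
    (Amat n w).mulVec (fun j => y j) i =
      (∑ j ∈ Finset.Ico (i : ℕ) (min ((i : ℕ) + w) n), y j) / w := by
  have hIco : (Finset.range n).filter (fun j => (i : ℕ) ≤ j ∧ j < (i : ℕ) + w) =
      Finset.Ico (i : ℕ) (min ((i : ℕ) + w) n) := by
    ext j
    simp only [Finset.mem_filter, Finset.mem_range, Finset.mem_Ico, lt_min_iff]
    omega
  simp only [Matrix.mulVec, dotProduct, Amat, ite_mul, zero_mul]
  rw [Fin.sum_univ_eq_sum_range (fun j => if (i : ℕ) ≤ j ∧ j < i + w then 1 / (w : ℝ) * y j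
    else 0), ← Finset.sum_filter, hIco, ← Finset.mul_sum, one_div_mul_eq_div]

theorem sum_comp_Amat_mulVec {w t m : ℕ} (φ : ℝ → ℝ) {y : ℕ → ℝ} {b : ℝ}
    (hy : ∀ k, t ≤ k → y k = b) (ht : t ≤ m) :
    ∑ i : Fin (m + w), φ ((Amat (m + w) w).mulVec (fun j => y j) i) =
      ∑ i ∈ Finset.range m, φ (windowAvg w y i) +
        ∑ k ∈ Finset.range w, φ ((w - k : ℕ) * b / w) := by
  simp only [Amat_mulVec_apply]
  rw [Fin.sum_univ_eq_sum_range
      (fun i => φ ((∑ j ∈ Finset.Ico i (min (i + w) (m + w)), y j) / w)),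
    Finset.sum_range_add]
  congr 1
  · refine Finset.sum_congr rfl fun i hi => ?_
    rw [min_eq_left (by simp at hi; omega), windowAvg, Finset.sum_Ico_eq_sum_range,
      add_tsub_cancel_left]
  · refine Finset.sum_congr rfl fun k _ => ?_
    rw [min_eq_right (by omega), Finset.sum_congr rfl fun j hj => hy j (by simp at hj; omega),
      Finset.sum_const, Nat.card_Ico, nsmul_eq_mul, Nat.add_sub_add_left]

theorem ScalarAdmissible.coupledPotential_shiftVec_sub {f : ℝ → ℝ → ℝ} {g : ℝ → ℝ}
    (hsys : ScalarAdmissible f g) {ε : ℝ} (hε : ε ∈ Icc (0:ℝ) 1) {w t m : ℕ} (hw : w ≠ 0)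
    (htm : t < m) {X : ℕ → ℝ} (hleft : ∀ k, k + 1 < w → X k = 0)
    (htail : ∀ k, t ≤ k → X k = X t) (hX : X t ∈ Icc (0:ℝ) 1) :
    coupledPotential f g (m + w) w (shiftVec fun i => X i) ε -
        coupledPotential f g (m + w) w (fun i => X i) ε =
      -singlePotential f g (X t) ε := by
  obtain ⟨m, rfl⟩ : ∃ m', m = m' + 1 := ⟨m - 1, by omega⟩
  have hg0 := hsys.g_zero
  have hG0 : Gint g 0 = 0 := intervalIntegral.integral_same
  have hF0 : Fint f 0 ε = 0 := intervalIntegral.integral_same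
  have hlast : X (m + 1 + w - 1) = X t := htail _ (by omega)
  have hquad := sum_shiftVec_sub (n := m + 1 + w) (by omega) (fun y => g y * y) X
  have hGsum := sum_shiftVec_sub (n := m + 1 + w) (by omega) (Gint g) X
  have hy : ∀ k, t ≤ k → g (X k) = g (X t) := fun k hk => by rw [htail k hk]
  have hSy : ∀ k, t + 1 ≤ k → shiftSeq (fun k => g (X k)) k = g (X t) := by
    rintro (_ | k) hk
    · omega
    · exact hy k (by omega)
  have hFsum : ∑ i : Fin (m + 1 + w),
        Fint f ((Amat (m + 1 + w) w).mulVec (fun j => g (shiftVec (fun i => X i) j)) i) ε -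
      ∑ i : Fin (m + 1 + w), Fint f ((Amat (m + 1 + w) w).mulVec (fun j => g (X j)) i) ε =
      -Fint f (g (X t)) ε := by
    simp only [shiftVec_eq_shiftSeq, apply_shiftSeq hg0]
    rw [sum_comp_Amat_mulVec (Fint f · ε) hSy htm,
      sum_comp_Amat_mulVec (Fint f · ε) (y := fun k => g (X k)) hy htm.le,
      add_sub_add_right_eq_sub, Finset.sum_range_succ_sub_sum_range_succ_of_succ_eq
        (fun i => by rw [windowAvg_shiftSeq_succ]),
      windowAvg_shiftSeq_zero fun k hk => by simp only [hleft k hk, hg0],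
      windowAvg_of_le hw hy (by omega), hF0, zero_sub]
  rw [coupledPotential, coupledPotential, hsys.singlePotential_eq hε hX]
  simp only [hlast, hg0, zero_mul, hG0] at hquad hGsum
  linarith

/-- Positions `−L−w, …, 2w+i₀` of the paper are the indices `0, …, n−1` of `Fin n`, so `x_{i₀}` is
the component at index `L+w+i₀`. -/
theorem coupled_potential_shift (f : ℝ → ℝ → ℝ) (g : ℝ → ℝ) (hsys : ScalarAdmissible f g)
    (w L : ℕ) (hw : 1 ≤ w) (n : ℕ) (hn : n = L + 3 * w + (w - 1) / 2 + 1)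
    (ε : ℝ) (hε : ε ∈ Icc (0:ℝ) 1)
    (x : Fin n → ℝ) (hmem : ∀ i, x i ∈ Icc (0:ℝ) 1)
    (hleft : ∀ i : Fin n, (i:ℕ) < w → x i = 0)
    (hright : ∀ i : Fin n, L + w + (w - 1) / 2 ≤ (i:ℕ) →
      x i = x ⟨L + w + (w - 1) / 2, by omega⟩) :
    coupledPotential f g n w (shiftVec x) ε - coupledPotential f g n w x ε =
      -(singlePotential f g (x ⟨L + w + (w - 1) / 2, by omega⟩) ε) := by
  obtain ⟨m, rfl⟩ : ∃ m, n = m + w := ⟨n - w, by omega⟩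
  set t := L + w + (w - 1) / 2
  set X : ℕ → ℝ := fun k => x ⟨min k t, by omega⟩
  have hx : x = fun i : Fin (m + w) => X i := by
    funext i
    rcases le_total (i : ℕ) t with hi | hi
    · simp only [X, min_eq_left hi]
    · simp only [X, min_eq_right hi]
      exact hright i hi
  have hXt : X t = x ⟨t, by omega⟩ := by simp only [X, min_self]
  rw [← hXt, hx]
  exact hsys.coupledPotential_shiftVec_sub hε (by omega) (t := t) (by omega)
    (fun k hk => by
      simpa [X, min_eq_left (by omega : k ≤ t)] using hleft ⟨k, by omega⟩ (show k < w by omega))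
    (fun k hk => by simp only [X, min_eq_right hk, min_self]) (hXt ▸ hmem _)
end
end

section
/- For a scalar admissible system (f,g), the one-sided spatially-coupled recursion initialized with all values equal to 1 converges to a fixed point that is non-decreasing in the position index, and its iterates (hence its fixed point) component-wise upper bound the iterates of the basic spatially-coupled recursion initialized with all values equal to 1, at every position i ∈ 𝓛 and every iteration ℓ. -/
open MeasureTheory Set Filter Topology

noncomputable section

/-- `ε_i = ε` for `i ∈ {−L,…,L}` and `ε_i = 0` otherwise. -/
def epsAt (ε : ℝ) (L : ℕ) (i : ℤ) : ℝ := if -(L:ℤ) ≤ i ∧ i ≤ (L:ℤ) then ε else 0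

/-- The spatially-coupled update value
`(1/w) Σ_{k=0}^{w−1} f( (1/w) Σ_{j=0}^{w−1} g(x_{i+j−k}); ε_{i−k} )` at position `i`. -/
def scPhi (f : ℝ → ℝ → ℝ) (g : ℝ → ℝ) (ε : ℝ) (L w : ℕ) (x : ℤ → ℝ) (i : ℤ) : ℝ :=
  (1 / (w:ℝ)) * ∑ k ∈ Finset.range w,
    f ((1 / (w:ℝ)) * ∑ j ∈ Finset.range w, g (x (i + (j:ℤ) - (k:ℤ))))
      (epsAt ε L (i - (k:ℤ)))

/-- One step of the basic spatially-coupled recursion on `𝓛 = {−L,…,L+w−1}`,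
extended by zero outside `𝓛`. -/
def scUpdate (f : ℝ → ℝ → ℝ) (g : ℝ → ℝ) (ε : ℝ) (L w : ℕ) (x : ℤ → ℝ) : ℤ → ℝ :=
  fun i => if -(L:ℤ) ≤ i ∧ i ≤ (L:ℤ) + (w:ℤ) - 1 then scPhi f g ε L w x i else 0

/-- One step of the one-sided spatially-coupled recursion with `i₀ = ⌊(w−1)/2⌋`:
values at `i < −L` are fixed to `0` and values at `i ≥ i₀` are all set to the
updated value at position `i₀`. -/
def scUpdateOneSided (f : ℝ → ℝ → ℝ) (g : ℝ → ℝ) (ε : ℝ) (L w : ℕ) (x : ℤ → ℝ) : ℤ → ℝ :=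
  fun i => if i < -(L:ℤ) then 0
    else if i ≤ (((w - 1) / 2 : ℕ) : ℤ) then scPhi f g ε L w x i
    else scPhi f g ε L w x (((w - 1) / 2 : ℕ) : ℤ)

/-!
Both recursions are order preserving on `[0,1]`-valued configurations. The basic SC
iterates stay symmetric about the centre `(w - 1) / 2` of `𝓛`, while the one-sided iterates
stay non-decreasing in the position: moving the coupling window one step to the right
trades its leftmost term, which is either zero (outside `{-L,…,L}`) or a smaller
average at the same `ε`, for a larger one. At positions up to `i₀` the two updates are the
same formula, so the one-sided iterate dominates the basic one by monotonicity; beyond `i₀`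
reflect about the centre and use that the one-sided iterate is non-decreasing. Starting from the maximal
configuration, the one-sided iterates decrease in `ℓ`, hence converge, and by continuity
of `f` and `g` the limit is a fixed point.
-/

variable {f : ℝ → ℝ → ℝ} {g : ℝ → ℝ} {ε : ℝ} {L w : ℕ}

namespace ScalarAdmissible

theorem monotoneOn_g (hsys : ScalarAdmissible f g) : MonotoneOn g (Icc 0 1) :=
  (strictMonoOn_of_deriv_pos (convex_Icc 0 1) hsys.g_smooth.continuousOn fun x hx =>
    hsys.g_deriv_pos x (interior_Icc (a := (0:ℝ)) (b := 1) ▸ hx)).monotoneOn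

theorem monotoneOn_f_left (hsys : ScalarAdmissible f g) (hε : ε ∈ Icc (0:ℝ) 1) :
    MonotoneOn (fun x => f x ε) (Icc 0 1) := by
  intro a ha b hb hab
  rcases hε.1.eq_or_lt with rfl | hε0
  · simp only [hsys.f_zero_right a ha, hsys.f_zero_right b hb, le_refl]
  rcases ha.1.eq_or_lt with rfl | ha0
  · simpa only [hsys.f_zero_left ε hε] using (hsys.f_mem b hb ε hε).1
  exact (hsys.f_mono_x ε ⟨hε0, hε.2⟩).monotoneOn ⟨ha0, ha.2⟩ ⟨ha0.trans_le hab, hb.2⟩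
    hab

end ScalarAdmissible

theorem epsAt_mem_Icc (hε : ε ∈ Icc (0:ℝ) 1) (L : ℕ) (m : ℤ) :
    epsAt ε L m ∈ Icc (0:ℝ) 1 := by
  unfold epsAt
  split_ifs
  · exact hε
  · exact ⟨le_rfl, zero_le_one⟩

theorem epsAt_neg (ε : ℝ) (L : ℕ) (m : ℤ) : epsAt ε L (-m) = epsAt ε L m := by
  unfold epsAt
  congr 1
  simp only [eq_iff_iff]
  omega

theorem one_div_mul_sum_mem_Icc {n : ℕ} {a : ℕ → ℝ} (ha : ∀ k < n, a k ∈ Icc (0:ℝ) 1) :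
    1 / (n:ℝ) * ∑ k ∈ Finset.range n, a k ∈ Icc (0:ℝ) 1 := by
  have hsum : ∑ k ∈ Finset.range n, a k ≤ n := by
    simpa using Finset.sum_le_sum fun k hk => (ha k (Finset.mem_range.1 hk)).2
  refine ⟨mul_nonneg (by positivity)
    (Finset.sum_nonneg fun k hk => (ha k (Finset.mem_range.1 hk)).1), ?_⟩
  calc 1 / (n:ℝ) * ∑ k ∈ Finset.range n, a k ≤ 1 / n * n := by gcongr
    _ ≤ 1 := by rw [one_div_mul_eq_div]; exact div_self_le_one _

theorem sum_range_sub_le_sum_range_succ_sub {c : ℤ → ℝ} (i : ℤ) (n : ℕ)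
    (h : c (i + 1 - n) ≤ c (i + 1)) :
    ∑ k ∈ Finset.range n, c (i - k) ≤ ∑ k ∈ Finset.range n, c (i + 1 - k) := by
  have telescope : ∀ n : ℕ, ∑ k ∈ Finset.range n, c (i + 1 - k)
      = ∑ k ∈ Finset.range n, c (i - k) + c (i + 1) - c (i + 1 - n) := by
    intro n
    induction n with
    | zero => simp
    | succ n ih =>
      rw [Finset.sum_range_succ, Finset.sum_range_succ, ih,
        show i + 1 - ((n + 1 : ℕ) : ℤ) = i - n by push_cast; ring]
      ring
  rw [telescope]
  linarith

def windowMean (g : ℝ → ℝ) (w : ℕ) (x : ℤ → ℝ) (m : ℤ) : ℝ :=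
  1 / (w:ℝ) * ∑ j ∈ Finset.range w, g (x (m + j))

theorem scPhi_eq_windowMean (f : ℝ → ℝ → ℝ) (g : ℝ → ℝ) (ε : ℝ) (L w : ℕ)
    (x : ℤ → ℝ) (i : ℤ) : scPhi f g ε L w x i
      = 1 / (w:ℝ) * ∑ k ∈ Finset.range w,
          f (windowMean g w x (i - k)) (epsAt ε L (i - k)) := by
  simp only [scPhi, windowMean, add_sub_right_comm]

section Configurations

variable {x y : ℤ → ℝ}

theorem windowMean_mem_Icc (hsys : ScalarAdmissible f g) (hx : ∀ j, x j ∈ Icc (0:ℝ) 1)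
    (m : ℤ) : windowMean g w x m ∈ Icc (0:ℝ) 1 :=
  one_div_mul_sum_mem_Icc fun _ _ => hsys.g_mem _ (hx _)

theorem windowMean_mono (hsys : ScalarAdmissible f g) (hx : ∀ j, x j ∈ Icc (0:ℝ) 1)
    (hy : ∀ j, y j ∈ Icc (0:ℝ) 1) (hxy : ∀ j, x j ≤ y j) (m : ℤ) :
    windowMean g w x m ≤ windowMean g w y m := by
  unfold windowMean
  gcongr with j
  exact hsys.monotoneOn_g (hx _) (hy _) (hxy _)

theorem monotone_windowMean (hsys : ScalarAdmissible f g) (hx : ∀ j, x j ∈ Icc (0:ℝ) 1)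
    (hmono : Monotone x) : Monotone (windowMean g w x) := by
  intro m m' hm
  unfold windowMean
  gcongr with j
  exact hsys.monotoneOn_g (hx _) (hx _) (hmono (by omega))

theorem windowMean_neg (hrefl : ∀ t, x t = x (w - 1 - t)) (m : ℤ) :
    windowMean g w x (-m) = windowMean g w x m := by
  unfold windowMean
  rw [← Finset.sum_range_reflect (fun j => g (x (-m + j))) w]
  refine congrArg _ (Finset.sum_congr rfl fun j hj => ?_)
  have hj : j < w := Finset.mem_range.1 hj
  rw [hrefl (m + j)]
  congr 2
  omega

theorem scPhi_mem_Icc (hsys : ScalarAdmissible f g) (hε : ε ∈ Icc (0:ℝ) 1)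
    (hx : ∀ j, x j ∈ Icc (0:ℝ) 1) (i : ℤ) : scPhi f g ε L w x i ∈ Icc (0:ℝ) 1 := by
  rw [scPhi_eq_windowMean]
  exact one_div_mul_sum_mem_Icc fun k _ =>
    hsys.f_mem _ (windowMean_mem_Icc hsys hx _) _ (epsAt_mem_Icc hε L _)

theorem scPhi_mono (hsys : ScalarAdmissible f g) (hε : ε ∈ Icc (0:ℝ) 1)
    (hx : ∀ j, x j ∈ Icc (0:ℝ) 1) (hy : ∀ j, y j ∈ Icc (0:ℝ) 1)
    (hxy : ∀ j, x j ≤ y j)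
    (i : ℤ) : scPhi f g ε L w x i ≤ scPhi f g ε L w y i := by
  rw [scPhi_eq_windowMean, scPhi_eq_windowMean]
  gcongr with k
  exact hsys.monotoneOn_f_left (epsAt_mem_Icc hε L _) (windowMean_mem_Icc hsys hx _)
    (windowMean_mem_Icc hsys hy _) (windowMean_mono hsys hx hy hxy _)

theorem scPhi_le_scPhi_add_one (hsys : ScalarAdmissible f g) (hε : ε ∈ Icc (0:ℝ) 1)
    (hx : ∀ j, x j ∈ Icc (0:ℝ) 1) (hmono : Monotone x) {i : ℤ}
    (hi : i + 1 ≤ (((w - 1) / 2 : ℕ) : ℤ)) :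
    scPhi f g ε L w x i ≤ scPhi f g ε L w x (i + 1) := by
  rw [scPhi_eq_windowMean, scPhi_eq_windowMean]
  gcongr 1 / (w:ℝ) * ?_
  refine sum_range_sub_le_sum_range_succ_sub (c := fun m => f (windowMean g w x m) (epsAt ε L m))
    i w ?_
  by_cases hout : i + 1 - w < -(L:ℤ)
  · have hε0 : epsAt ε L (i + 1 - w) = 0 := if_neg (by omega)
    simp only [hε0, hsys.f_zero_right _ (windowMean_mem_Icc hsys hx _)]
    exact (hsys.f_mem _ (windowMean_mem_Icc hsys hx _) _ (epsAt_mem_Icc hε L _)).1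
  · -- `2 i₀ ≤ w` puts both ends of the window inside `{-L,…,L}`
    have hε1 : epsAt ε L (i + 1 - w) = ε := if_pos ⟨by omega, by omega⟩
    have hε2 : epsAt ε L (i + 1) = ε := if_pos ⟨by omega, by omega⟩
    simp only [hε1, hε2]
    exact hsys.monotoneOn_f_left hε (windowMean_mem_Icc hsys hx _)
      (windowMean_mem_Icc hsys hx _) (monotone_windowMean hsys hx hmono (by omega))

theorem scPhi_reflect (hrefl : ∀ t, x t = x (w - 1 - t)) (i : ℤ) :
    scPhi f g ε L w x (w - 1 - i) = scPhi f g ε L w x i := by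
  rw [scPhi_eq_windowMean, scPhi_eq_windowMean,
    ← Finset.sum_range_reflect (fun k => f (windowMean g w x (w - 1 - i - k))
      (epsAt ε L (w - 1 - i - k))) w]
  refine congrArg _ (Finset.sum_congr rfl fun k hk => ?_)
  have hk : k < w := Finset.mem_range.1 hk
  have harg : (w:ℤ) - 1 - i - ((w - 1 - k : ℕ) : ℤ) = -(i - k) := by omega
  simp only [harg, epsAt_neg, windowMean_neg hrefl]

theorem scUpdate_mem_Icc (hsys : ScalarAdmissible f g) (hε : ε ∈ Icc (0:ℝ) 1)
    (hx : ∀ j, x j ∈ Icc (0:ℝ) 1) (i : ℤ) : scUpdate f g ε L w x i ∈ Icc (0:ℝ) 1 := by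
  unfold scUpdate
  split_ifs
  · exact scPhi_mem_Icc hsys hε hx i
  · exact ⟨le_rfl, zero_le_one⟩

theorem scUpdate_reflect (hrefl : ∀ t, x t = x (w - 1 - t)) (i : ℤ) :
    scUpdate f g ε L w x (w - 1 - i) = scUpdate f g ε L w x i := by
  unfold scUpdate
  by_cases h : -(L:ℤ) ≤ i ∧ i ≤ L + w - 1
  · rw [if_pos h, if_pos (by omega), scPhi_reflect hrefl]
  · rw [if_neg h, if_neg (by omega)]

theorem scUpdateOneSided_mem_Icc (hsys : ScalarAdmissible f g) (hε : ε ∈ Icc (0:ℝ) 1)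
    (hx : ∀ j, x j ∈ Icc (0:ℝ) 1) (i : ℤ) :
    scUpdateOneSided f g ε L w x i ∈ Icc (0:ℝ) 1 := by
  unfold scUpdateOneSided
  split_ifs
  · exact ⟨le_rfl, zero_le_one⟩
  · exact scPhi_mem_Icc hsys hε hx _
  · exact scPhi_mem_Icc hsys hε hx _

theorem scUpdateOneSided_mono (hsys : ScalarAdmissible f g) (hε : ε ∈ Icc (0:ℝ) 1)
    (hx : ∀ j, x j ∈ Icc (0:ℝ) 1) (hy : ∀ j, y j ∈ Icc (0:ℝ) 1)
    (hxy : ∀ j, x j ≤ y j)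
    (i : ℤ) : scUpdateOneSided f g ε L w x i ≤ scUpdateOneSided f g ε L w y i := by
  unfold scUpdateOneSided
  split_ifs
  · exact le_rfl
  · exact scPhi_mono hsys hε hx hy hxy _
  · exact scPhi_mono hsys hε hx hy hxy _

theorem monotone_scUpdateOneSided (hsys : ScalarAdmissible f g) (hε : ε ∈ Icc (0:ℝ) 1)
    (hx : ∀ j, x j ∈ Icc (0:ℝ) 1) (hmono : Monotone x) :
    Monotone (scUpdateOneSided f g ε L w x) := by
  refine monotone_int_of_le_succ fun i => ?_
  by_cases hi : i < -(L:ℤ)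
  · have hzero : scUpdateOneSided f g ε L w x i = 0 := if_pos hi
    rw [hzero]
    exact (scUpdateOneSided_mem_Icc hsys hε hx _).1
  · simp only [scUpdateOneSided, if_neg hi, if_neg (show ¬ i + 1 < -(L:ℤ) by omega)]
    split_ifs with h1 h2 h2
    · exact scPhi_le_scPhi_add_one hsys hε hx hmono h2
    · rw [show i = (((w - 1) / 2 : ℕ) : ℤ) by omega]
    · omega
    · exact le_rfl

theorem scUpdate_le_scUpdateOneSided (hsys : ScalarAdmissible f g) (hε : ε ∈ Icc (0:ℝ) 1)
    (hx : ∀ j, x j ∈ Icc (0:ℝ) 1) (hy : ∀ j, y j ∈ Icc (0:ℝ) 1)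
    (hxy : ∀ j, x j ≤ y j)
    (hrefl : ∀ t, x t = x (w - 1 - t)) (hmono : Monotone y) (i : ℤ) :
    scUpdate f g ε L w x i ≤ scUpdateOneSided f g ε L w y i := by
  have left : ∀ i : ℤ, i ≤ (((w - 1) / 2 : ℕ) : ℤ) →
      scUpdate f g ε L w x i ≤ scUpdateOneSided f g ε L w y i := by
    intro i hi
    unfold scUpdate
    by_cases hmem : -(L:ℤ) ≤ i ∧ i ≤ L + w - 1
    · unfold scUpdateOneSided
      rw [if_pos hmem, if_neg (by omega), if_pos hi]
      exact scPhi_mono hsys hε hx hy hxy i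
    · rw [if_neg hmem]
      exact (scUpdateOneSided_mem_Icc hsys hε hy i).1
  by_cases hi : i ≤ (((w - 1) / 2 : ℕ) : ℤ)
  · exact left i hi
  calc scUpdate f g ε L w x i = scUpdate f g ε L w x (w - 1 - i) :=
        (scUpdate_reflect hrefl i).symm
    _ ≤ scUpdateOneSided f g ε L w y (w - 1 - i) := left _ (by omega)
    _ ≤ scUpdateOneSided f g ε L w y i := monotone_scUpdateOneSided hsys hε hy hmono (by omega)

end Configurations

theorem tendsto_windowMean {ι : Type*} {l : Filter ι} (hsys : ScalarAdmissible f g)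
    {Z : ι → ℤ → ℝ} {z : ℤ → ℝ} (hZ : ∀ n j, Z n j ∈ Icc (0:ℝ) 1)
    (hz : ∀ j, z j ∈ Icc (0:ℝ) 1) (hlim : ∀ j, Tendsto (fun n => Z n j) l (𝓝 (z j)))
    (m : ℤ) : Tendsto (fun n => windowMean g w (Z n) m) l (𝓝 (windowMean g w z m)) := by
  refine (tendsto_finsetSum _ fun j _ => ?_).const_mul _
  exact (hsys.g_smooth.continuousOn _ (hz _)).tendsto.comp
    (tendsto_nhdsWithin_iff.2 ⟨hlim _, Eventually.of_forall fun n => hZ n _⟩)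

theorem tendsto_scPhi {ι : Type*} {l : Filter ι} (hsys : ScalarAdmissible f g)
    (hε : ε ∈ Icc (0:ℝ) 1) {Z : ι → ℤ → ℝ} {z : ℤ → ℝ} (hZ : ∀ n j, Z n j ∈ Icc (0:ℝ) 1)
    (hz : ∀ j, z j ∈ Icc (0:ℝ) 1) (hlim : ∀ j, Tendsto (fun n => Z n j) l (𝓝 (z j)))
    (i : ℤ) : Tendsto (fun n => scPhi f g ε L w (Z n) i) l (𝓝 (scPhi f g ε L w z i)) := by
  simp only [scPhi_eq_windowMean]
  refine (tendsto_finsetSum _ fun k _ => ?_).const_mul _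
  have hf := hsys.f_smooth.continuousOn _
    (mk_mem_prod (windowMean_mem_Icc (w := w) hsys hz (i - k)) (epsAt_mem_Icc hε L (i - k)))
  refine hf.tendsto.comp (tendsto_nhdsWithin_iff.2 ⟨?_, Eventually.of_forall fun n =>
    mk_mem_prod (windowMean_mem_Icc hsys (hZ n) _) (epsAt_mem_Icc hε L _)⟩)
  exact (tendsto_windowMean hsys hZ hz hlim _).prodMk_nhds tendsto_const_nhds

theorem tendsto_scUpdateOneSided {ι : Type*} {l : Filter ι} (hsys : ScalarAdmissible f g)
    (hε : ε ∈ Icc (0:ℝ) 1) {Z : ι → ℤ → ℝ} {z : ℤ → ℝ} (hZ : ∀ n j, Z n j ∈ Icc (0:ℝ) 1)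
    (hz : ∀ j, z j ∈ Icc (0:ℝ) 1) (hlim : ∀ j, Tendsto (fun n => Z n j) l (𝓝 (z j)))
    (i : ℤ) :
    Tendsto (fun n => scUpdateOneSided f g ε L w (Z n) i) l
      (𝓝 (scUpdateOneSided f g ε L w z i)) := by
  unfold scUpdateOneSided
  split_ifs
  · exact tendsto_const_nhds
  · exact tendsto_scPhi hsys hε hZ hz hlim i
  · exact tendsto_scPhi hsys hε hZ hz hlim _

section Iterates

variable {X Y : ℕ → ℤ → ℝ}

theorem scUpdate_iterate_mem_Icc (hsys : ScalarAdmissible f g) (hε : ε ∈ Icc (0:ℝ) 1)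
    (hX0 : ∀ i : ℤ, X 0 i = if -(L:ℤ) ≤ i ∧ i ≤ (L:ℤ) + (w:ℤ) - 1 then 1 else 0)
    (hXs : ∀ ℓ : ℕ, X (ℓ + 1) = scUpdate f g ε L w (X ℓ)) (ℓ : ℕ) (i : ℤ) :
    X ℓ i ∈ Icc (0:ℝ) 1 := by
  induction ℓ generalizing i with
  | zero => rw [hX0]; split_ifs <;> norm_num
  | succ n ih => rw [hXs]; exact scUpdate_mem_Icc hsys hε ih i

theorem scUpdate_iterate_reflect
    (hX0 : ∀ i : ℤ, X 0 i = if -(L:ℤ) ≤ i ∧ i ≤ (L:ℤ) + (w:ℤ) - 1 then 1 else 0)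
    (hXs : ∀ ℓ : ℕ, X (ℓ + 1) = scUpdate f g ε L w (X ℓ)) (ℓ : ℕ) (t : ℤ) :
    X ℓ t = X ℓ (w - 1 - t) := by
  induction ℓ generalizing t with
  | zero =>
    rw [hX0, hX0]
    congr 1
    simp only [eq_iff_iff]
    omega
  | succ n ih => rw [hXs, scUpdate_reflect ih]

theorem scUpdateOneSided_iterate_mem_Icc (hsys : ScalarAdmissible f g)
    (hε : ε ∈ Icc (0:ℝ) 1) (hY0 : ∀ i : ℤ, Y 0 i = if i < -(L:ℤ) then 0 else 1)
    (hYs : ∀ ℓ : ℕ, Y (ℓ + 1) = scUpdateOneSided f g ε L w (Y ℓ)) (ℓ : ℕ) (i : ℤ) :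
    Y ℓ i ∈ Icc (0:ℝ) 1 := by
  induction ℓ generalizing i with
  | zero => rw [hY0]; split_ifs <;> norm_num
  | succ n ih => rw [hYs]; exact scUpdateOneSided_mem_Icc hsys hε ih i

theorem monotone_scUpdateOneSided_iterate (hsys : ScalarAdmissible f g)
    (hε : ε ∈ Icc (0:ℝ) 1) (hY0 : ∀ i : ℤ, Y 0 i = if i < -(L:ℤ) then 0 else 1)
    (hYs : ∀ ℓ : ℕ, Y (ℓ + 1) = scUpdateOneSided f g ε L w (Y ℓ)) (ℓ : ℕ) :
    Monotone (Y ℓ) := by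
  induction ℓ with
  | zero =>
    refine monotone_int_of_le_succ fun i => ?_
    rw [hY0, hY0]
    split_ifs <;> first | omega | norm_num
  | succ n ih =>
    rw [hYs]
    exact monotone_scUpdateOneSided hsys hε
      (scUpdateOneSided_iterate_mem_Icc hsys hε hY0 hYs n) ih

theorem antitone_scUpdateOneSided_iterate (hsys : ScalarAdmissible f g)
    (hε : ε ∈ Icc (0:ℝ) 1) (hY0 : ∀ i : ℤ, Y 0 i = if i < -(L:ℤ) then 0 else 1)
    (hYs : ∀ ℓ : ℕ, Y (ℓ + 1) = scUpdateOneSided f g ε L w (Y ℓ)) (i : ℤ) :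
    Antitone fun ℓ => Y ℓ i := by
  have hYmem := scUpdateOneSided_iterate_mem_Icc hsys hε hY0 hYs
  refine antitone_nat_of_succ_le fun ℓ => ?_
  induction ℓ generalizing i with
  | zero =>
    by_cases hi : i < -(L:ℤ)
    · rw [hYs, hY0, if_pos hi]
      exact (if_pos hi).le
    · rw [hY0, if_neg hi]
      exact (hYmem 1 i).2
  | succ n ih =>
    calc Y (n + 1 + 1) i = scUpdateOneSided f g ε L w (Y (n + 1)) i := by rw [hYs]
      _ ≤ scUpdateOneSided f g ε L w (Y n) i :=
        scUpdateOneSided_mono hsys hε (hYmem _) (hYmem _) ih i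
      _ = Y (n + 1) i := by rw [hYs]

theorem scUpdate_iterate_le_scUpdateOneSided_iterate (hsys : ScalarAdmissible f g)
    (hε : ε ∈ Icc (0:ℝ) 1)
    (hX0 : ∀ i : ℤ, X 0 i = if -(L:ℤ) ≤ i ∧ i ≤ (L:ℤ) + (w:ℤ) - 1 then 1 else 0)
    (hXs : ∀ ℓ : ℕ, X (ℓ + 1) = scUpdate f g ε L w (X ℓ))
    (hY0 : ∀ i : ℤ, Y 0 i = if i < -(L:ℤ) then 0 else 1)
    (hYs : ∀ ℓ : ℕ, Y (ℓ + 1) = scUpdateOneSided f g ε L w (Y ℓ)) (ℓ : ℕ) (i : ℤ) :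
    X ℓ i ≤ Y ℓ i := by
  induction ℓ generalizing i with
  | zero =>
    rw [hX0, hY0]
    split_ifs <;> first | omega | norm_num
  | succ n ih =>
    rw [hXs, hYs]
    exact scUpdate_le_scUpdateOneSided hsys hε (scUpdate_iterate_mem_Icc hsys hε hX0 hXs n)
      (scUpdateOneSided_iterate_mem_Icc hsys hε hY0 hYs n) ih
      (scUpdate_iterate_reflect hX0 hXs n) (monotone_scUpdateOneSided_iterate hsys hε hY0 hYs n) i

end Iterates

theorem one_sided_sc_bounds_basic_sc_general (f : ℝ → ℝ → ℝ) (g : ℝ → ℝ)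
    (hsys : ScalarAdmissible f g) (ε : ℝ) (hε : ε ∈ Icc (0:ℝ) 1)
    (w L : ℕ) (X Y : ℕ → ℤ → ℝ)
    (hX0 : ∀ i : ℤ, X 0 i = if -(L:ℤ) ≤ i ∧ i ≤ (L:ℤ) + (w:ℤ) - 1 then 1 else 0)
    (hXs : ∀ ℓ : ℕ, X (ℓ + 1) = scUpdate f g ε L w (X ℓ))
    (hY0 : ∀ i : ℤ, Y 0 i = if i < -(L:ℤ) then 0 else 1)
    (hYs : ∀ ℓ : ℕ, Y (ℓ + 1) = scUpdateOneSided f g ε L w (Y ℓ)) :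
    (∀ ℓ : ℕ, ∀ i : ℤ, -(L:ℤ) ≤ i → i ≤ (L:ℤ) + (w:ℤ) - 1 → X ℓ i ≤ Y ℓ i) ∧
      ∃ y : ℤ → ℝ, (∀ i : ℤ, Tendsto (fun ℓ => Y ℓ i) atTop (𝓝 (y i))) ∧
        scUpdateOneSided f g ε L w y = y ∧ (∀ i j : ℤ, i ≤ j → y i ≤ y j) := by
  have hYmem := scUpdateOneSided_iterate_mem_Icc hsys hε hY0 hYs
  refine ⟨fun ℓ i _ _ =>
    scUpdate_iterate_le_scUpdateOneSided_iterate hsys hε hX0 hXs hY0 hYs ℓ i, ?_⟩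
  obtain ⟨y, hy⟩ : ∃ y : ℤ → ℝ, ∀ i, Tendsto (fun ℓ => Y ℓ i) atTop (𝓝 (y i)) :=
    ⟨fun i => ⨅ ℓ, Y ℓ i, fun i => tendsto_atTop_ciInf
      (antitone_scUpdateOneSided_iterate hsys hε hY0 hYs i)
      ⟨0, forall_mem_range.2 fun ℓ => (hYmem ℓ i).1⟩⟩
  have hymem : ∀ i, y i ∈ Icc (0:ℝ) 1 := fun i =>
    isClosed_Icc.mem_of_tendsto (hy i) (Eventually.of_forall fun ℓ => hYmem ℓ i)
  refine ⟨y, hy, funext fun i => ?_, fun i j hij =>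
    le_of_tendsto_of_tendsto' (hy i) (hy j) fun ℓ =>
      monotone_scUpdateOneSided_iterate hsys hε hY0 hYs ℓ hij⟩
  refine tendsto_nhds_unique (tendsto_scUpdateOneSided hsys hε hYmem hymem hy i) ?_
  simpa only [← hYs, Function.comp_def] using (hy i).comp (tendsto_add_atTop_nat 1)

/-- The one-sided SC recursion initialized with all (non-fixed) values equal to `1`
converges to a fixed point that is non-decreasing in the position index, and its
iterates component-wise upper bound the iterates of the basic SC recursion
initialized with all values equal to `1`, at every position `i ∈ 𝓛` and iteration `ℓ`. -/
theorem one_sided_sc_bounds_basic_sc (f : ℝ → ℝ → ℝ) (g : ℝ → ℝ)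
    (hsys : ScalarAdmissible f g) (ε : ℝ) (hε : ε ∈ Icc (0:ℝ) 1)
    (w L : ℕ) (hw : 1 ≤ w) (hL : 1 ≤ L) (X Y : ℕ → ℤ → ℝ)
    (hX0 : ∀ i : ℤ, X 0 i = if -(L:ℤ) ≤ i ∧ i ≤ (L:ℤ) + (w:ℤ) - 1 then 1 else 0)
    (hXs : ∀ ℓ : ℕ, X (ℓ + 1) = scUpdate f g ε L w (X ℓ))
    (hY0 : ∀ i : ℤ, Y 0 i = if i < -(L:ℤ) then 0 else 1)
    (hYs : ∀ ℓ : ℕ, Y (ℓ + 1) = scUpdateOneSided f g ε L w (Y ℓ)) :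
    (∀ ℓ : ℕ, ∀ i : ℤ, -(L:ℤ) ≤ i → i ≤ (L:ℤ) + (w:ℤ) - 1 → X ℓ i ≤ Y ℓ i) ∧
      ∃ y : ℤ → ℝ, (∀ i : ℤ, Tendsto (fun ℓ => Y ℓ i) atTop (𝓝 (y i))) ∧
        scUpdateOneSided f g ε L w y = y ∧ (∀ i j : ℤ, i ≤ j → y i ≤ y j) :=
  one_sided_sc_bounds_basic_sc_general f g hsys ε hε w L X Y hX0 hXs hY0 hYs
end
end

section
/- For the LDPC(λ,ρ) density-evolution system on the BEC, the single-system potential satisfies U(x;ε) = (1/L'(1))·(−P(x) + (ε(x) − ε)·L(1−ρ(1−x))) for all x ∈ (0,1] and ε ∈ [0,1]; equivalently, U(x;ε) = −x·ρ(1−x) + (1−R(1−x))/R'(1) − ε·L(1−ρ(1−x))/L'(1). -/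
open MeasureTheory Set Filter Topology Polynomial

noncomputable section

/-- `L(x) = ∫₀ˣ λ(y) dy / ∫₀¹ λ(y) dy` (normalized node-perspective degree distribution). -/
def Lnorm (lam : Polynomial ℝ) (x : ℝ) : ℝ :=
  (∫ y in (0:ℝ)..x, lam.eval y) / ∫ y in (0:ℝ)..1, lam.eval y

/-- `f(x;ε) = ε λ(x)` for the LDPC(λ,ρ) density evolution on the BEC. -/
def ldpcF (lam : Polynomial ℝ) : ℝ → ℝ → ℝ := fun x ε => ε * lam.eval x

/-- `g(x) = 1 − ρ(1−x)` for the LDPC(λ,ρ) density evolution on the BEC. -/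
def ldpcG (rho : Polynomial ℝ) : ℝ → ℝ := fun x => 1 - rho.eval (1 - x)

/-- `ε(x) = x / λ(1 − ρ(1−x))`. -/
def epsRoot (lam rho : Polynomial ℝ) (x : ℝ) : ℝ := x / lam.eval (1 - rho.eval (1 - x))

/-- The trial entropy
`P(x) = ε(x) L(1−ρ(1−x)) + L'(1) x ρ(1−x) − (L'(1)/R'(1)) (1 − R(1−x))`. -/
def trialEntropy (lam rho : Polynomial ℝ) (x : ℝ) : ℝ :=
  epsRoot lam rho x * Lnorm lam (1 - rho.eval (1 - x)) +
    deriv (Lnorm lam) 1 * x * rho.eval (1 - x) -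
    (deriv (Lnorm lam) 1 / deriv (Lnorm rho) 1) * (1 - Lnorm rho (1 - x))

/-!
The integrand of `U(x;ε)` is an exact derivative: since `g'(z) = ρ'(1 - z)`, the term `z g'(z)`
integrates by parts to `-z ρ(1 - z) - ∫₀^{1-z} ρ`, and `ε λ(g z) g'(z)` is the derivative of
`ε ∫₀^{g z} λ`. Evaluating between `0` and `x` (where `g 0 = 0` because `ρ(1) = 1`) gives `U` in
terms of antiderivatives of `λ` and `ρ`. Finally `L'(1) = λ(1) / ∫₀¹ λ`, so `L(y) / L'(1) = ∫₀^y λ`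
when `λ(1) = 1`, and likewise for `R`; the `ε(x)`-terms of the first form cancel.
-/

namespace Polynomial

theorem eval_pos_of_coeff_nonneg {p : ℝ[X]} (hp : p ≠ 0) (hc : ∀ k, 0 ≤ p.coeff k) {t : ℝ}
    (ht : 0 < t) : 0 < p.eval t := by
  obtain ⟨k, hk⟩ := nonempty_support_iff.mpr hp
  rw [eval_eq_sum, sum_def]
  refine Finset.sum_pos' (fun i _ => mul_nonneg (hc i) (pow_nonneg ht.le i)) ⟨k, hk, ?_⟩
  exact mul_pos ((hc k).lt_of_ne' (mem_support_iff.mp hk)) (pow_pos ht k)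

theorem integral_eval_pos_of_coeff_nonneg {p : ℝ[X]} (hp : p ≠ 0) (hc : ∀ k, 0 ≤ p.coeff k) :
    0 < ∫ y in (0:ℝ)..1, p.eval y :=
  intervalIntegral.intervalIntegral_pos_of_pos_on (p.continuous.intervalIntegrable _ _)
    (fun _ hy => eval_pos_of_coeff_nonneg hp hc hy.1) one_pos

theorem hasDerivAt_integral_eval (p : ℝ[X]) (y : ℝ) :
    HasDerivAt (fun u => ∫ t in (0:ℝ)..u, p.eval t) (p.eval y) y :=
  (p.continuous.integral_hasStrictDerivAt 0 y).hasDerivAt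

end Polynomial

theorem deriv_Lnorm (p : ℝ[X]) (y : ℝ) :
    deriv (Lnorm p) y = p.eval y / ∫ t in (0:ℝ)..1, p.eval t :=
  ((p.hasDerivAt_integral_eval y).div_const _).deriv

theorem deriv_Lnorm_one_ne_zero {p : ℝ[X]} (hp : ∫ t in (0:ℝ)..1, p.eval t ≠ 0)
    (h1 : p.eval 1 = 1) : deriv (Lnorm p) 1 ≠ 0 := by
  rw [deriv_Lnorm, h1]
  exact one_div_ne_zero hp

theorem Lnorm_one {p : ℝ[X]} (hp : ∫ t in (0:ℝ)..1, p.eval t ≠ 0) : Lnorm p 1 = 1 :=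
  div_self hp

theorem Lnorm_div_deriv_Lnorm_one {p : ℝ[X]} (hp : ∫ t in (0:ℝ)..1, p.eval t ≠ 0)
    (h1 : p.eval 1 = 1) (y : ℝ) :
    Lnorm p y / deriv (Lnorm p) 1 = ∫ t in (0:ℝ)..y, p.eval t := by
  rw [deriv_Lnorm, h1, Lnorm]
  field_simp

theorem hasDerivAt_ldpcG (rho : ℝ[X]) (z : ℝ) :
    HasDerivAt (ldpcG rho) ((derivative rho).eval (1 - z)) z := by
  show HasDerivAt (fun z => 1 - rho.eval (1 - z)) _ z
  simpa using ((rho.hasDerivAt (1 - z)).comp z ((hasDerivAt_id z).const_sub 1)).const_sub 1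

theorem hasDerivAt_ldpc_potential_antideriv (lam rho : ℝ[X]) (ε z : ℝ) :
    HasDerivAt
      (fun z => -(z * rho.eval (1 - z)) - (∫ t in (0:ℝ)..(1 - z), rho.eval t) -
        ε * ∫ t in (0:ℝ)..ldpcG rho z, lam.eval t)
      ((z - ldpcF lam (ldpcG rho z) ε) * deriv (ldpcG rho) z) z := by
  have hsub : HasDerivAt (fun z : ℝ => 1 - z) (-1) z := (hasDerivAt_id z).const_sub 1
  have hprod := (hasDerivAt_id z).mul ((rho.hasDerivAt (1 - z)).comp z hsub)
  have hR := (rho.hasDerivAt_integral_eval (1 - z)).comp z hsub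
  have hL := ((lam.hasDerivAt_integral_eval _).comp z (hasDerivAt_ldpcG rho z)).const_mul ε
  rw [(hasDerivAt_ldpcG rho z).deriv, ldpcF]
  refine ((hprod.neg.sub hR).sub hL).congr_deriv ?_
  simp only [ldpcG, Function.comp_apply, id]
  ring

theorem singlePotential_ldpc (lam rho : ℝ[X]) (hrho1 : rho.eval 1 = 1) (x ε : ℝ) :
    singlePotential (ldpcF lam) (ldpcG rho) x ε =
      -(x * rho.eval (1 - x)) +
        ((∫ t in (0:ℝ)..1, rho.eval t) - ∫ t in (0:ℝ)..(1 - x), rho.eval t) -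
        ε * ∫ t in (0:ℝ)..(1 - rho.eval (1 - x)), lam.eval t := by
  have hcont : Continuous fun z => (z - ldpcF lam (ldpcG rho z) ε) * deriv (ldpcG rho) z := by
    simp only [fun z => (hasDerivAt_ldpcG rho z).deriv, ldpcF, ldpcG]
    fun_prop
  rw [singlePotential, intervalIntegral.integral_eq_sub_of_hasDerivAt
    (fun z _ => hasDerivAt_ldpc_potential_antideriv lam rho ε z) (hcont.intervalIntegrable _ _)]
  simp only [ldpcG, sub_zero, hrho1, sub_self, mul_one, neg_zero, zero_sub, mul_zero,
    intervalIntegral.integral_same]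
  ring

theorem ldpc_potential_closed_form_general (lam rho : Polynomial ℝ)
    (hlam_coeff : ∀ k, 0 ≤ lam.coeff k) (hrho_coeff : ∀ k, 0 ≤ rho.coeff k)
    (hlam1 : lam.eval 1 = 1) (hrho1 : rho.eval 1 = 1) :
    ∀ x ∈ Ioc (0:ℝ) 1, ∀ ε ∈ Icc (0:ℝ) 1,
      singlePotential (ldpcF lam) (ldpcG rho) x ε =
        (1 / deriv (Lnorm lam) 1) *
          (-(trialEntropy lam rho x) +
            (epsRoot lam rho x - ε) * Lnorm lam (1 - rho.eval (1 - x))) ∧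
      singlePotential (ldpcF lam) (ldpcG rho) x ε =
        -x * rho.eval (1 - x) + (1 - Lnorm rho (1 - x)) / deriv (Lnorm rho) 1 -
          ε * Lnorm lam (1 - rho.eval (1 - x)) / deriv (Lnorm lam) 1 := by
  intro x _ ε _
  have hJlam := (integral_eval_pos_of_coeff_nonneg
    (ne_of_apply_ne (eval 1) (by simp [hlam1])) hlam_coeff).ne'
  have hJrho := (integral_eval_pos_of_coeff_nonneg
    (ne_of_apply_ne (eval 1) (by simp [hrho1])) hrho_coeff).ne'
  have closed_form : singlePotential (ldpcF lam) (ldpcG rho) x ε =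
      -x * rho.eval (1 - x) + (1 - Lnorm rho (1 - x)) / deriv (Lnorm rho) 1 -
        ε * Lnorm lam (1 - rho.eval (1 - x)) / deriv (Lnorm lam) 1 := by
    rw [singlePotential_ldpc lam rho hrho1, ← Lnorm_div_deriv_Lnorm_one hJrho hrho1 1,
      ← Lnorm_div_deriv_Lnorm_one hJrho hrho1 (1 - x),
      ← Lnorm_div_deriv_Lnorm_one hJlam hlam1 (1 - rho.eval (1 - x)), Lnorm_one hJrho]
    ring
  have hL'1 := deriv_Lnorm_one_ne_zero hJlam hlam1
  refine ⟨?_, closed_form⟩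
  rw [closed_form, trialEntropy]
  field_simp
  ring

/-- For the LDPC(λ,ρ) density-evolution system on the BEC, the single-system potential
satisfies `U(x;ε) = (1/L'(1)) (−P(x) + (ε(x) − ε) L(1−ρ(1−x)))` for all `x ∈ (0,1]`
and `ε ∈ [0,1]`; equivalently,
`U(x;ε) = −x ρ(1−x) + (1−R(1−x))/R'(1) − ε L(1−ρ(1−x))/L'(1)`. -/
theorem ldpc_potential_closed_form (lam rho : Polynomial ℝ)
    (hlam_coeff : ∀ k, 0 ≤ lam.coeff k) (hrho_coeff : ∀ k, 0 ≤ rho.coeff k)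
    (hlam1 : lam.eval 1 = 1) (hrho1 : rho.eval 1 = 1) (hlam0 : lam.eval 0 = 0) :
    ∀ x ∈ Ioc (0:ℝ) 1, ∀ ε ∈ Icc (0:ℝ) 1,
      singlePotential (ldpcF lam) (ldpcG rho) x ε =
        (1 / deriv (Lnorm lam) 1) *
          (-(trialEntropy lam rho x) +
            (epsRoot lam rho x - ε) * Lnorm lam (1 - rho.eval (1 - x))) ∧
      singlePotential (ldpcF lam) (ldpcG rho) x ε =
        -x * rho.eval (1 - x) + (1 - Lnorm rho (1 - x)) / deriv (Lnorm rho) 1 -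
          ε * Lnorm lam (1 - rho.eval (1 - x)) / deriv (Lnorm lam) 1 :=
  ldpc_potential_closed_form_general lam rho hlam_coeff hrho_coeff hlam1 hrho1
end
end

section
/- For integers n and t with 2 ≤ t ≤ ⌊(n−1)/2⌋, let x̄ be the unique root in (0,1] of P(x) = −x·g(x) + 2∫₀ˣ g(z)dz, and let ε̄ = x̄/g(x̄). Then the potential threshold ε* of the scalar admissible system with f(x;ε) = εx and g(x) = Σ_{e=t}^{n−1} C(n−1,e) x^e (1−x)^{n−1−e} satisfies ε* = ε̄. -/
/-!
With `f(x;ε) = εx`, integration by parts gives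
`U(x;ε) = x g(x) - ∫₀ˣ g - ε g(x)²/2 = (g(x) (x - ε g(x)) - P(x)) / 2`,
so at the root `x̄` of `P` we get `U(x̄;ε) = g(x̄)² (ε̄ - ε) / 2`.
The sign of `ψ(x) = x g'(x) - g(x)` governs both `P' = -ψ` and `(x / g(x))' = -ψ / g(x)²`.
For the binomial tail `g`, `ψ(x) = xᵗ (1-x)^(m-t) (t·C(m,t) - q(x/(1-x)))` with `q` an increasing
polynomial and `q(0) = C(m,t)`, so for `t ≥ 2` the function `ψ` is positive and then negative,
changing sign once at some `x_s`. Hence `x / g(x)` decreases from `+∞` on `(0, x_s]`, increases on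
`[x_s, 1]`, and `x̄ > x_s`. For `ε = ε̄` the smallest fixed point `u` is the solution of
`u / g(u) = ε̄` in `(0, x_s]`, and `U(·;ε̄)` decreases on `[u, x̄]` and increases on `[x̄, 1]`, so
its minimum there is `U(x̄;ε̄) = 0`. For `ε > ε̄`, `x̄` lies in `[u(ε), 1]` and `U(x̄;ε) < 0`.
-/

open MeasureTheory Set Filter Topology

noncomputable section

/-- `g(x) = Σ_{e=t}^{n−1} C(n−1,e) xᵉ (1−x)^{n−1−e}`, the check-node update of the GLDPC
density evolution (degree-2 bits, length-`n` BCH constraints correcting `t` erasures). -/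
def gldpcG (n t : ℕ) (x : ℝ) : ℝ :=
  ∑ e ∈ Finset.Icc t (n - 1), ((n - 1).choose e : ℝ) * x ^ e * (1 - x) ^ (n - 1 - e)

/-- `P(x) = −x g(x) + 2 ∫₀ˣ g(z) dz`. -/
def gldpcP (n t : ℕ) (x : ℝ) : ℝ :=
  -x * gldpcG n t x + 2 * ∫ z in (0:ℝ)..x, gldpcG n t z

section Threshold

variable {f : ℝ → ℝ → ℝ} {g : ℝ → ℝ} {ε u : ℝ}

theorem uFix_le (hu : 0 < u) (hfix : u ≤ f (g u) ε) : uFix f g ε ≤ u :=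
  Real.sSup_le (fun _ ⟨_, hbelow⟩ => le_of_not_gt fun hlt => (hbelow u hu hlt).not_ge hfix) hu.le

theorem le_uFix (hu : u ∈ Icc 0 1) (hbelow : ∀ x, 0 < x → x < u → f (g x) ε < x) :
    u ≤ uFix f g ε :=
  le_csSup ⟨1, fun _ hxt => hxt.1.2⟩ ⟨hu, hbelow⟩

theorem energyGap_nonneg (h : ∀ x ∈ Icc (uFix f g ε) 1, 0 ≤ singlePotential f g x ε) :
    0 ≤ energyGap f g ε :=
  Real.sInf_nonneg <| forall_mem_image.2 h

theorem energyGap_le (hU : ContinuousOn (singlePotential f g · ε) (Icc (uFix f g ε) 1))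
    {x : ℝ} (hx : x ∈ Icc (uFix f g ε) 1) : energyGap f g ε ≤ singlePotential f g x ε :=
  csInf_le (isCompact_Icc.image_of_continuousOn hU).bddBelow (mem_image_of_mem _ hx)

end Threshold

theorem le_of_deriv_nonpos_of_deriv_nonneg {h : ℝ → ℝ} (hh : Differentiable ℝ h) {a b c x : ℝ}
    (hleft : ∀ y ∈ Ioo a b, deriv h y ≤ 0) (hright : ∀ y ∈ Ioo b c, 0 ≤ deriv h y)
    (hx : x ∈ Icc a c) : h b ≤ h x := by
  rcases le_total x b with hxb | hbx
  · refine antitoneOn_of_deriv_nonpos (convex_Icc a b) hh.continuous.continuousOn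
      hh.differentiableOn ?_ ⟨hx.1, hxb⟩ ⟨hx.1.trans hxb, le_rfl⟩ hxb
    simpa only [interior_Icc] using hleft
  · refine monotoneOn_of_deriv_nonneg (convex_Icc b c) hh.continuous.continuousOn
      hh.differentiableOn ?_ ⟨le_rfl, hbx.trans hx.2⟩ ⟨hbx, hx.2⟩ hbx
    simpa only [interior_Icc] using hright

section LinearCoupling

variable {g : ℝ → ℝ}

theorem hasDerivAt_singlePotential_linear (hg : ContDiff ℝ 1 g) (ε x : ℝ) :
    HasDerivAt (singlePotential (fun x ε => ε * x) g · ε) ((x - ε * g x) * deriv g x) x :=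
  ((continuous_id.sub (continuous_const.mul hg.continuous)).mul
    (hg.continuous_deriv le_rfl)).integral_hasStrictDerivAt 0 x |>.hasDerivAt

theorem singlePotential_linear_eq (hg : ContDiff ℝ 1 g) (hg0 : g 0 = 0) (x ε : ℝ) :
    singlePotential (fun x ε => ε * x) g x ε
      = x * g x - (∫ z in (0 : ℝ)..x, g z) - ε * g x ^ 2 / 2 := by
  have hF : ∀ y, HasDerivAt (fun y => y * g y - (∫ z in (0 : ℝ)..y, g z) - ε * g y ^ 2 / 2)
      ((y - ε * g y) * deriv g y) y := by
    intro y
    have hgy : HasDerivAt g (deriv g y) y := (hg.differentiable one_ne_zero y).hasDerivAt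
    refine ((((hasDerivAt_id y).mul hgy).sub
      (hg.continuous.integral_hasStrictDerivAt 0 y).hasDerivAt).sub
      (((hgy.pow 2).const_mul ε).div_const 2)).congr_deriv ?_
    simp only [id]
    ring
  rw [singlePotential, intervalIntegral.integral_eq_sub_of_hasDerivAt (fun y _ => hF y)
    (((continuous_id.sub (continuous_const.mul hg.continuous)).mul
      (hg.continuous_deriv le_rfl)).intervalIntegrable 0 x)]
  simp [hg0]

theorem hasDerivAt_id_div (hg : ContDiff ℝ 1 g) {x : ℝ} (hx : g x ≠ 0) :
    HasDerivAt (fun x => x / g x) ((g x - x * deriv g x) / g x ^ 2) x := by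
  simpa using (hasDerivAt_id x).fun_div ((hg.differentiable one_ne_zero x).hasDerivAt) hx

theorem strictAntiOn_id_div (hg : ContDiff ℝ 1 g) {D : Set ℝ} (hD : Convex ℝ D)
    (hpos : ∀ x ∈ D, 0 < g x) (hψ : ∀ x ∈ interior D, g x < x * deriv g x) :
    StrictAntiOn (fun x => x / g x) D := by
  refine strictAntiOn_of_deriv_neg hD
    (continuousOn_id.div hg.continuous.continuousOn fun x hx => (hpos x hx).ne') fun x hx => ?_
  have hgx := hpos x (interior_subset hx)
  rw [(hasDerivAt_id_div hg hgx.ne').deriv]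
  exact div_neg_of_neg_of_pos (sub_neg.2 (hψ x hx)) (by positivity)

theorem monotoneOn_id_div (hg : ContDiff ℝ 1 g) {D : Set ℝ} (hD : Convex ℝ D)
    (hpos : ∀ x ∈ D, 0 < g x) (hψ : ∀ x ∈ interior D, x * deriv g x ≤ g x) :
    MonotoneOn (fun x => x / g x) D := by
  refine monotoneOn_of_deriv_nonneg hD
    (continuousOn_id.div hg.continuous.continuousOn fun x hx => (hpos x hx).ne')
    (fun x hx => (hasDerivAt_id_div hg (hpos x (interior_subset hx)).ne').differentiableAt
      |>.differentiableWithinAt) fun x hx => ?_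
  rw [(hasDerivAt_id_div hg (hpos x (interior_subset hx)).ne').deriv]
  exact div_nonneg (sub_nonneg.2 (hψ x hx)) (sq_nonneg _)

theorem lt_of_mul_eq_two_mul_integral (hg : ContDiff ℝ 1 g) {xs xbar : ℝ}
    (hψ : ∀ x ∈ Ioo 0 xs, g x < x * deriv g x) (hxbar : 0 < xbar)
    (hroot : xbar * g xbar = 2 * ∫ z in (0 : ℝ)..xbar, g z) : xs < xbar := by
  by_contra! hle
  set φ : ℝ → ℝ := fun y => y * g y - 2 * ∫ z in (0 : ℝ)..y, g z
  have hφ : ∀ y, HasDerivAt φ (y * deriv g y - g y) y := fun y =>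
    (((hasDerivAt_id y).mul (hg.differentiable one_ne_zero y).hasDerivAt).sub
      ((hg.continuous.integral_hasStrictDerivAt 0 y).hasDerivAt.const_mul 2)).congr_deriv
      (by simp only [id]; ring)
  have hmono : StrictMonoOn φ (Icc 0 xs) :=
    strictMonoOn_of_deriv_pos (convex_Icc 0 xs)
      (continuous_iff_continuousAt.2 fun y => (hφ y).continuousAt).continuousOn
      fun y hy => by
        rw [(hφ y).deriv, sub_pos]
        exact hψ y (by simpa only [interior_Icc] using hy)
  have := hmono ⟨le_rfl, hxbar.le.trans hle⟩ ⟨hxbar.le, hle⟩ hxbar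
  simp [φ, hroot] at this

theorem exists_id_div_eq {C xs c : ℝ} (hg : ContinuousOn g (Ioc 0 xs)) (hxs : 0 < xs)
    (hpos : ∀ x ∈ Ioc 0 xs, 0 < g x) (hquad : ∀ x ∈ Ioc 0 xs, g x ≤ C * x ^ 2)
    (hc : xs / g xs ≤ c) : ∃ u ∈ Ioc 0 xs, u / g u = c := by
  have hxs_mem : xs ∈ Ioc 0 xs := ⟨hxs, le_rfl⟩
  have hC : 0 < C := by
    have := (hpos xs hxs_mem).trans_le (hquad xs hxs_mem)
    exact pos_of_mul_pos_left this (by positivity)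
  have hc0 : 0 < c := (div_pos hxs (hpos xs hxs_mem)).trans_le hc
  -- `x / g x ≥ 1 / (C x)` is large near `0`; this point supplies the left end for the IVT.
  set x0 := min xs (1 / (C * c))
  have hx0 : x0 ∈ Ioc 0 xs := ⟨lt_min hxs (by positivity), min_le_left _ _⟩
  have hcx0 : c ≤ x0 / g x0 := by
    rw [le_div_iff₀ (hpos x0 hx0)]
    have : C * c * x0 ≤ 1 := by
      have := min_le_right xs (1 / (C * c))
      rwa [le_div_iff₀ (by positivity), mul_comm] at this
    calc c * g x0 ≤ c * (C * x0 ^ 2) := by gcongr; exact hquad x0 hx0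
      _ = (C * c * x0) * x0 := by ring
      _ ≤ 1 * x0 := by gcongr
      _ = x0 := one_mul x0
  have hsub : Icc x0 xs ⊆ Ioc 0 xs := fun y hy => ⟨hx0.1.trans_le hy.1, hy.2⟩
  obtain ⟨u, hu, hue⟩ := intermediate_value_Icc' hx0.2
    (continuousOn_id.div (hg.mono hsub) fun y hy => (hpos y (hsub hy)).ne') ⟨hc, hcx0⟩
  exact ⟨u, hsub hu, hue⟩

theorem singlePotential_linear_nonneg (hg : ContDiff ℝ 1 g) {u xbar c x : ℝ}
    (hxbar : xbar ∈ Icc u 1) (hmono : ∀ y ∈ Ioo u 1, 0 ≤ deriv g y)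
    (hbelow : ∀ y ∈ Ioo u xbar, y ≤ c * g y) (habove : ∀ y ∈ Ioo xbar 1, c * g y ≤ y)
    (hzero : singlePotential (fun x ε => ε * x) g xbar c = 0) (hx : x ∈ Icc u 1) :
    0 ≤ singlePotential (fun x ε => ε * x) g x c := by
  have hU := hasDerivAt_singlePotential_linear hg c
  refine hzero ▸ le_of_deriv_nonpos_of_deriv_nonneg (fun y => (hU y).differentiableAt)
    (fun y hy => ?_) (fun y hy => ?_) hx
  · rw [(hU y).deriv]
    exact mul_nonpos_of_nonpos_of_nonneg (sub_nonpos.2 (hbelow y hy))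
      (hmono y ⟨hy.1, hy.2.trans_le hxbar.2⟩)
  · rw [(hU y).deriv]
    exact mul_nonneg (sub_nonneg.2 (habove y hy)) (hmono y ⟨hxbar.1.trans_lt hy.1, hy.2⟩)

theorem singlePotential_linear_eq_of_root (hg : ContDiff ℝ 1 g) (hg0 : g 0 = 0) {xbar : ℝ}
    (hroot : xbar * g xbar = 2 * ∫ z in (0 : ℝ)..xbar, g z) (ε : ℝ) :
    singlePotential (fun x ε => ε * x) g xbar ε = g xbar * (xbar - ε * g xbar) / 2 := by
  rw [singlePotential_linear_eq hg hg0]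
  linear_combination hroot / 2

theorem uFix_linear_eq {b u : ℝ} (hpos : ∀ x ∈ Ioc 0 b, 0 < g x)
    (hanti : StrictAntiOn (fun x => x / g x) (Ioc 0 b)) (hb : b ≤ 1) (hu : u ∈ Ioc 0 b) :
    uFix (fun x ε => ε * x) g (u / g u) = u := by
  refine le_antisymm (uFix_le hu.1 (div_mul_cancel₀ _ (hpos u hu).ne').ge)
    (le_uFix ⟨hu.1.le, hu.2.trans hb⟩ fun x hx hxu => ?_)
  have hx_mem : x ∈ Ioc 0 b := ⟨hx, hxu.le.trans hu.2⟩
  exact (lt_div_iff₀ (hpos x hx_mem)).1 (hanti hx_mem hu hxu)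

theorem id_div_le_of_mem_Icc {xs u xbar y : ℝ}
    (hanti : StrictAntiOn (fun x => x / g x) (Ioc 0 xs))
    (hmono : MonotoneOn (fun x => x / g x) (Icc xs 1)) (hu : u ∈ Ioc 0 xs)
    (hxbar : xbar ∈ Icc xs 1) (hue : u / g u = xbar / g xbar) (hy : y ∈ Icc u xbar) :
    y / g y ≤ xbar / g xbar := by
  rcases le_total y xs with hyxs | hxsy
  · exact hue ▸ hanti.antitoneOn hu ⟨hu.1.trans_le hy.1, hyxs⟩ hy.1
  · exact hmono ⟨hxsy, hy.2.trans hxbar.2⟩ hxbar hy.2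

theorem le_of_energyGap_nonneg (hg : ContDiff ℝ 1 g) (hg0 : g 0 = 0) {xbar ε : ℝ}
    (hxbar : xbar ∈ Ioc 0 1) (hgxbar : 0 < g xbar)
    (hroot : xbar * g xbar = 2 * ∫ z in (0 : ℝ)..xbar, g z)
    (hgap : 0 ≤ energyGap (fun x ε => ε * x) g ε) : ε ≤ xbar / g xbar := by
  by_contra! hlt
  have hfix : xbar < ε * g xbar := (div_lt_iff₀ hgxbar).1 hlt
  have := energyGap_le (fun x _ => (hasDerivAt_singlePotential_linear hg ε x).continuousAt
    |>.continuousWithinAt) ⟨uFix_le hxbar.1 hfix.le, hxbar.2⟩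
  rw [singlePotential_linear_eq_of_root hg hg0 hroot] at this
  nlinarith

theorem potentialThreshold_linear {C xs xbar : ℝ} (hg : ContDiff ℝ 1 g) (hg0 : g 0 = 0)
    (hg1 : g 1 = 1) (hpos : ∀ x ∈ Ioc 0 1, 0 < g x) (hmono : ∀ x ∈ Ioo 0 1, 0 ≤ deriv g x)
    (hquad : ∀ x ∈ Ioc 0 1, g x ≤ C * x ^ 2) (hxs : xs ∈ Ioo 0 1)
    (hψpos : ∀ x ∈ Ioo 0 xs, g x < x * deriv g x) (hψneg : ∀ x ∈ Ioo xs 1, x * deriv g x < g x)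
    (hxbar : xbar ∈ Ioc 0 1) (hroot : xbar * g xbar = 2 * ∫ z in (0 : ℝ)..xbar, g z) :
    potentialThreshold (fun x ε => ε * x) g = xbar / g xbar := by
  have hpos_xs : ∀ x ∈ Ioc 0 xs, 0 < g x := fun x hx => hpos x ⟨hx.1, hx.2.trans hxs.2.le⟩
  have hanti : StrictAntiOn (fun x => x / g x) (Ioc 0 xs) :=
    strictAntiOn_id_div hg (convex_Ioc 0 xs) hpos_xs (by simpa only [interior_Ioc] using hψpos)
  have hmono_div : MonotoneOn (fun x => x / g x) (Icc xs 1) :=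
    monotoneOn_id_div hg (convex_Icc xs 1) (fun x hx => hpos x ⟨hxs.1.trans_le hx.1, hx.2⟩)
      (by simpa only [interior_Icc] using fun x hx => (hψneg x hx).le)
  have hxbar_mem : xbar ∈ Icc xs 1 :=
    ⟨(lt_of_mul_eq_two_mul_integral hg hψpos hxbar.1 hroot).le, hxbar.2⟩
  have hgxbar := hpos xbar hxbar
  obtain ⟨u, hu, hue⟩ : ∃ u ∈ Ioc 0 xs, u / g u = xbar / g xbar :=
    exists_id_div_eq hg.continuous.continuousOn hxs.1 hpos_xs
      (fun x hx => hquad x ⟨hx.1, hx.2.trans hxs.2.le⟩)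
      (hmono_div ⟨le_rfl, hxs.2.le⟩ hxbar_mem hxbar_mem.1)
  have huFix : uFix (fun x ε => ε * x) g (xbar / g xbar) = u :=
    hue ▸ uFix_linear_eq hpos_xs hanti hxs.2.le hu
  refine IsGreatest.csSup_eq ⟨⟨⟨(div_pos hxbar.1 hgxbar).le, ?_⟩, huFix ▸ hu.1,
    energyGap_nonneg fun x hx => ?_⟩, fun ε ⟨_, _, hgap⟩ =>
      le_of_energyGap_nonneg hg hg0 hxbar hgxbar hroot hgap⟩
  · simpa [hg1] using hmono_div hxbar_mem ⟨hxs.2.le, le_rfl⟩ hxbar.2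
  rw [huFix] at hx
  have hgy : ∀ y ∈ Ioo u 1, 0 < g y := fun y hy => hpos y ⟨hu.1.trans hy.1, hy.2.le⟩
  refine singlePotential_linear_nonneg hg ⟨hu.2.trans hxbar_mem.1, hxbar.2⟩
    (fun y hy => hmono y ⟨hu.1.trans hy.1, hy.2⟩) (fun y hy => ?_) (fun y hy => ?_) ?_ hx
  · rw [← div_le_iff₀ (hgy y ⟨hy.1, hy.2.trans_le hxbar.2⟩)]
    exact id_div_le_of_mem_Icc hanti hmono_div hu hxbar_mem hue ⟨hy.1.le, hy.2.le⟩
  · rw [← le_div_iff₀ (hgy y ⟨hu.2.trans_lt (hxbar_mem.1.trans_lt hy.1), hy.2⟩)]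
    exact hmono_div hxbar_mem ⟨hxbar_mem.1.trans hy.1.le, hy.2.le⟩ hy.1.le
  · rw [singlePotential_linear_eq_of_root hg hg0 hroot, div_mul_cancel₀ _ hgxbar.ne']
    ring

end LinearCoupling

theorem cast_choose_mul_eq {m e : ℕ} (he : 1 ≤ e) (hem : e ≤ m) :
    (m.choose e : ℝ) * e = m * (m - 1).choose (e - 1) := by
  have := Nat.add_one_mul_choose_eq (m - 1) (e - 1)
  rw [Nat.sub_add_cancel (he.trans hem), Nat.sub_add_cancel he] at this
  exact_mod_cast this.symm

theorem strictMonoOn_div_one_sub : StrictMonoOn (fun x : ℝ => x / (1 - x)) (Iio 1) := by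
  intro a ha b hb hab
  have ha' : 0 < 1 - a := by linarith [mem_Iio.1 ha]
  have hb' : 0 < 1 - b := by linarith [mem_Iio.1 hb]
  rw [div_lt_div_iff₀ ha' hb']
  linarith

def tailPoly (m t : ℕ) (y : ℝ) : ℝ :=
  ∑ e ∈ Finset.Icc t m, (m.choose e : ℝ) * y ^ (e - t)

namespace tailPoly

theorem continuous (m t : ℕ) : Continuous (tailPoly m t) := by
  unfold tailPoly
  fun_prop

theorem apply_zero {m t : ℕ} (htm : t ≤ m) : tailPoly m t 0 = m.choose t := by
  rw [tailPoly, Finset.sum_eq_single_of_mem t (Finset.mem_Icc.2 ⟨le_rfl, htm⟩)]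
  · simp
  · intro e he het
    simp [Nat.sub_ne_zero_of_lt (lt_of_le_of_ne (Finset.mem_Icc.1 he).1 (Ne.symm het))]

theorem strictMonoOn {m t : ℕ} (htm : t < m) : StrictMonoOn (tailPoly m t) (Ici 0) := by
  intro a ha b hb hab
  apply Finset.sum_lt_sum
  · intro e _
    gcongr
  · exact ⟨m, Finset.mem_Icc.2 ⟨htm.le, le_rfl⟩,
      mul_lt_mul_of_pos_left (pow_lt_pow_left₀ hab ha (by omega)) (by simp)⟩

theorem self_le {m t : ℕ} (htm : t < m) {y : ℝ} (hy : 1 ≤ y) : y ≤ tailPoly m t y := by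
  have htop := Finset.single_le_sum (f := fun e => (m.choose e : ℝ) * y ^ (e - t))
    (fun e _ => by positivity) (Finset.mem_Icc.2 ⟨htm.le, le_refl m⟩)
  simp only [Nat.choose_self, Nat.cast_one, one_mul] at htop
  exact (le_self_pow₀ hy (by omega)).trans htop

theorem exists_eq_div_one_sub {m t : ℕ} (htm : t < m) {c : ℝ} (hc : tailPoly m t 0 < c) :
    ∃ x ∈ Ioo (0 : ℝ) 1, tailPoly m t (x / (1 - x)) = c := by
  have hc0 : 0 ≤ c := by
    rw [apply_zero htm.le] at hc
    exact (Nat.cast_nonneg _).trans hc.le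
  obtain ⟨y, hy, hq⟩ := intermediate_value_Icc (by linarith : (0 : ℝ) ≤ c + 1)
    (continuous m t).continuousOn ⟨hc.le, (self_le htm (by linarith)).trans' (by linarith)⟩
  have hy0 : 0 < y := lt_of_le_of_ne hy.1 (by rintro rfl; exact hc.ne hq)
  refine ⟨y / (1 + y), ⟨by positivity, by rw [div_lt_one (by linarith)]; linarith⟩, ?_⟩
  rw [← hq]
  congr 1
  field_simp
  ring

end tailPoly

def binomTail (m k : ℕ) (x : ℝ) : ℝ :=
  ∑ e ∈ Finset.Icc k m, (m.choose e : ℝ) * x ^ e * (1 - x) ^ (m - e)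

namespace binomTail

theorem hasDerivAt_term {m e : ℕ} (he : 1 ≤ e) (hem : e ≤ m) (x : ℝ) :
    HasDerivAt (fun y => (m.choose e : ℝ) * y ^ e * (1 - y) ^ (m - e))
      (m * (((m - 1).choose (e - 1) : ℝ) * x ^ (e - 1) * (1 - x) ^ (m - e)
        - ((m - 1).choose e : ℝ) * x ^ e * (1 - x) ^ (m - (e + 1)))) x := by
  have hlow := cast_choose_mul_eq he hem
  have hup : (m.choose e : ℝ) * ((m - e : ℕ) : ℝ) = m * (m - 1).choose e := by
    have := Nat.choose_mul_succ_eq (m - 1) e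
    rw [Nat.sub_add_cancel (he.trans hem)] at this
    exact_mod_cast this.symm.trans (mul_comm _ _)
  have hsub : HasDerivAt (fun y : ℝ => 1 - y) (-1) x := by
    simpa using (hasDerivAt_id x).const_sub 1
  refine (((hasDerivAt_pow e x).const_mul (m.choose e : ℝ)).fun_mul
    ((hasDerivAt_pow (m - e) (1 - x)).comp x hsub)).congr_deriv ?_
  rw [Function.comp_apply, ← Nat.sub_sub]
  linear_combination (x ^ (e - 1) * (1 - x) ^ (m - e)) * hlow
    - (x ^ e * (1 - x) ^ (m - e - 1)) * hup

theorem hasDerivAt {m k : ℕ} (hk : 1 ≤ k) (hkm : k ≤ m) (x : ℝ) :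
    HasDerivAt (binomTail m k)
      (m * ((m - 1).choose (k - 1) : ℝ) * x ^ (k - 1) * (1 - x) ^ (m - k)) x := by
  set F : ℕ → ℝ := fun j => ((m - 1).choose (j - 1) : ℝ) * x ^ (j - 1) * (1 - x) ^ (m - j)
  have hterm : ∀ e ∈ Finset.Icc k m,
      HasDerivAt (fun y => (m.choose e : ℝ) * y ^ e * (1 - y) ^ (m - e))
        (-(m * (F (e + 1) - F e))) x := by
    intro e he
    rw [Finset.mem_Icc] at he
    convert hasDerivAt_term (hk.trans he.1) he.2 x using 1
    simp only [F, Nat.add_sub_cancel]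
    ring
  have hFtop : F (m + 1) = 0 := by
    simp [F, Nat.choose_eq_zero_of_lt (show m - 1 < m by omega)]
  refine (HasDerivAt.fun_sum
    (A := fun e y => (m.choose e : ℝ) * y ^ e * (1 - y) ^ (m - e)) hterm).congr_deriv ?_
  rw [Finset.sum_neg_distrib, ← Finset.mul_sum, Finset.sum_Icc_sub hkm, hFtop]
  ring

theorem contDiff (m k : ℕ) : ContDiff ℝ 1 (binomTail m k) := by
  unfold binomTail
  fun_prop

theorem deriv_nonneg {m k : ℕ} (hk : 1 ≤ k) (hkm : k ≤ m) {x : ℝ} (hx : x ∈ Icc 0 1) :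
    0 ≤ deriv (binomTail m k) x := by
  rw [(hasDerivAt hk hkm x).deriv]
  exact mul_nonneg (by have := hx.1; positivity) (pow_nonneg (sub_nonneg.2 hx.2) _)

theorem apply_zero {m k : ℕ} (hk : 1 ≤ k) : binomTail m k 0 = 0 :=
  Finset.sum_eq_zero fun e he => by
    simp [Nat.one_le_iff_ne_zero.1 (hk.trans (Finset.mem_Icc.1 he).1)]

theorem apply_one {m k : ℕ} (hkm : k ≤ m) : binomTail m k 1 = 1 := by
  rw [binomTail, Finset.sum_eq_single_of_mem m (Finset.mem_Icc.2 ⟨hkm, le_rfl⟩)]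
  · simp
  · intro e he hem
    simp [Nat.sub_ne_zero_of_lt (lt_of_le_of_ne (Finset.mem_Icc.1 he).2 hem)]

theorem term_nonneg {m e : ℕ} {x : ℝ} (hx : x ∈ Icc 0 1) :
    0 ≤ (m.choose e : ℝ) * x ^ e * (1 - x) ^ (m - e) :=
  mul_nonneg (mul_nonneg (Nat.cast_nonneg _) (pow_nonneg hx.1 e)) (pow_nonneg (sub_nonneg.2 hx.2) _)

theorem pos {m k : ℕ} (hkm : k ≤ m) {x : ℝ} (hx : x ∈ Ioc 0 1) : 0 < binomTail m k x := by
  have htop := Finset.single_le_sum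
    (fun e _ => term_nonneg (m := m) (e := e) (Ioc_subset_Icc_self hx))
    (Finset.mem_Icc.2 ⟨hkm, le_refl m⟩)
  simp only [Nat.choose_self, Nat.cast_one, one_mul, Nat.sub_self, pow_zero, mul_one] at htop
  exact (pow_pos hx.1 m).trans_le htop

theorem le_two_pow_mul_sq {m k : ℕ} (hk : 2 ≤ k) {x : ℝ} (hx : x ∈ Icc 0 1) :
    binomTail m k x ≤ 2 ^ m * x ^ 2 := by
  have hterm : ∀ e ∈ Finset.Icc k m,
      (m.choose e : ℝ) * x ^ e * (1 - x) ^ (m - e) ≤ (m.choose e : ℝ) * x ^ 2 := by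
    intro e he
    have hxe : x ^ e ≤ x ^ 2 := pow_le_pow_of_le_one hx.1 hx.2 (hk.trans (Finset.mem_Icc.1 he).1)
    have h1x : (1 - x) ^ (m - e) ≤ 1 := pow_le_one₀ (by linarith [hx.2]) (by linarith [hx.1])
    calc (m.choose e : ℝ) * x ^ e * (1 - x) ^ (m - e) ≤ (m.choose e : ℝ) * x ^ e * 1 := by
          gcongr
          exact mul_nonneg (Nat.cast_nonneg _) (pow_nonneg hx.1 e)
      _ ≤ (m.choose e : ℝ) * x ^ 2 := by rw [mul_one]; gcongr
  have hchoose : ∑ e ∈ Finset.Icc k m, (m.choose e : ℝ) ≤ 2 ^ m := by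
    calc ∑ e ∈ Finset.Icc k m, (m.choose e : ℝ) ≤ ∑ e ∈ Finset.range (m + 1), (m.choose e : ℝ) :=
          Finset.sum_le_sum_of_subset_of_nonneg
            (fun e he => Finset.mem_range.2 (Nat.lt_succ_of_le (Finset.mem_Icc.1 he).2))
            fun _ _ _ => Nat.cast_nonneg _
      _ = 2 ^ m := by exact_mod_cast Nat.sum_range_choose m
  calc binomTail m k x ≤ ∑ e ∈ Finset.Icc k m, (m.choose e : ℝ) * x ^ 2 :=
        Finset.sum_le_sum hterm
    _ = (∑ e ∈ Finset.Icc k m, (m.choose e : ℝ)) * x ^ 2 := (Finset.sum_mul _ _ _).symm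
    _ ≤ 2 ^ m * x ^ 2 := by gcongr

theorem eq_mul_tailPoly {m t : ℕ} {x : ℝ} (hx : x < 1) :
    binomTail m t x = x ^ t * (1 - x) ^ (m - t) * tailPoly m t (x / (1 - x)) := by
  have h1x : 1 - x ≠ 0 := by linarith
  rw [binomTail, tailPoly, Finset.mul_sum]
  refine Finset.sum_congr rfl fun e he => ?_
  obtain ⟨hte, hem⟩ := Finset.mem_Icc.1 he
  have hx_split : x ^ e = x ^ t * x ^ (e - t) := by rw [← pow_add, Nat.add_sub_cancel' hte]
  have h1x_split : (1 - x) ^ (m - t) = (1 - x) ^ (m - e) * (1 - x) ^ (e - t) := by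
    rw [← pow_add]; congr 1; omega
  rw [div_pow, hx_split, h1x_split]
  field_simp

theorem mul_deriv_sub_eq {m t : ℕ} (ht : 1 ≤ t) (htm : t ≤ m) {x : ℝ} (hx : x < 1) :
    x * deriv (binomTail m t) x - binomTail m t x = x ^ t * (1 - x) ^ (m - t)
      * (m * ((m - 1).choose (t - 1) : ℝ) - tailPoly m t (x / (1 - x))) := by
  have hxt : x ^ t = x * x ^ (t - 1) := by rw [← pow_succ', Nat.sub_add_cancel ht]
  rw [(hasDerivAt ht htm x).deriv, eq_mul_tailPoly hx, hxt]
  ring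

theorem exists_sign_change {m t : ℕ} (ht : 2 ≤ t) (htm : t < m) :
    ∃ xs ∈ Ioo (0 : ℝ) 1,
      (∀ x ∈ Ioo 0 xs, binomTail m t x < x * deriv (binomTail m t) x) ∧
      ∀ x ∈ Ioo xs 1, x * deriv (binomTail m t) x < binomTail m t x := by
  set M : ℝ := m * ((m - 1).choose (t - 1) : ℝ)
  have hweight : ∀ x ∈ Ioo (0 : ℝ) 1, 0 < x ^ t * (1 - x) ^ (m - t) := fun x hx =>
    mul_pos (pow_pos hx.1 t) (pow_pos (by linarith [hx.2]) _)
  have hM0 : tailPoly m t 0 < M := by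
    have hC : (0 : ℝ) < m.choose t := by exact_mod_cast Nat.choose_pos htm.le
    have ht' : (2 : ℝ) ≤ t := by exact_mod_cast ht
    rw [tailPoly.apply_zero htm.le, show M = m.choose t * t from
      (cast_choose_mul_eq (by omega) htm.le).symm]
    nlinarith
  obtain ⟨xs, hxs, hq_xs⟩ := tailPoly.exists_eq_div_one_sub htm hM0
  have hmono : StrictMonoOn (fun x => tailPoly m t (x / (1 - x))) (Ico 0 1) :=
    (tailPoly.strictMonoOn htm).comp (strictMonoOn_div_one_sub.mono fun x hx => hx.2)
      fun x hx => div_nonneg hx.1 (by linarith [hx.2])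
  refine ⟨xs, hxs, fun x hx => ?_, fun x hx => ?_⟩
  · have hx1 : x ∈ Ioo (0 : ℝ) 1 := ⟨hx.1, hx.2.trans hxs.2⟩
    have := (hmono ⟨hx1.1.le, hx1.2⟩ ⟨hxs.1.le, hxs.2⟩ hx.2).trans_eq hq_xs
    have := mul_pos (hweight x hx1) (sub_pos.2 this)
    linarith [mul_deriv_sub_eq (m := m) (by omega) htm.le hx1.2]
  · have hx1 : x ∈ Ioo (0 : ℝ) 1 := ⟨hxs.1.trans hx.1, hx.2⟩
    have := hq_xs.symm.trans_lt (hmono ⟨hxs.1.le, hxs.2⟩ ⟨hx1.1.le, hx1.2⟩ hx.1)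
    have := mul_neg_of_pos_of_neg (hweight x hx1) (sub_neg.2 this)
    linarith [mul_deriv_sub_eq (m := m) (by omega) htm.le hx1.2]

end binomTail

theorem gldpc_potential_threshold_general (n t : ℕ) (ht1 : 2 ≤ t) (ht2 : t ≤ (n - 1) / 2)
    (xbar : ℝ) (hxbar : xbar ∈ Ioc (0:ℝ) 1) (hroot : gldpcP n t xbar = 0) :
    potentialThreshold (fun x ε => ε * x) (gldpcG n t) = xbar / gldpcG n t xbar := by
  have htm : t < n - 1 := by omega
  obtain ⟨xs, hxs, hψpos, hψneg⟩ := binomTail.exists_sign_change ht1 htm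
  refine potentialThreshold_linear (C := 2 ^ (n - 1)) (binomTail.contDiff _ _)
    (binomTail.apply_zero (by omega)) (binomTail.apply_one htm.le)
    (fun x hx => binomTail.pos htm.le hx)
    (fun x hx => binomTail.deriv_nonneg (by omega) htm.le (Ioo_subset_Icc_self hx))
    (fun x hx => binomTail.le_two_pow_mul_sq ht1 (Ioc_subset_Icc_self hx))
    hxs hψpos hψneg hxbar ?_
  rw [gldpcP] at hroot
  linarith

/-- For `2 ≤ t ≤ ⌊(n−1)/2⌋`, if `x̄` is the unique root in `(0,1]` of
`P(x) = −x g(x) + 2∫₀ˣ g(z) dz` and `ε̄ = x̄/g(x̄)`, then the potential threshold of the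
GLDPC system `f(x;ε) = εx`, `g` satisfies `ε* = ε̄`. -/
theorem gldpc_potential_threshold (n t : ℕ) (ht1 : 2 ≤ t) (ht2 : t ≤ (n - 1) / 2)
    (xbar : ℝ) (hxbar : xbar ∈ Ioc (0:ℝ) 1) (hroot : gldpcP n t xbar = 0)
    (huniq : ∀ y ∈ Ioc (0:ℝ) 1, gldpcP n t y = 0 → y = xbar) :
    potentialThreshold (fun x ε => ε * x) (gldpcG n t) = xbar / gldpcG n t xbar :=
  gldpc_potential_threshold_general n t ht1 ht2 xbar hxbar hroot
end
end
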